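/- arXiv:1205.0570 — 10 statements merged into one kernel-verified Lean document; each statement's English description precedes it below -/
import Mathlib

section
/- For all n ≥ 1, the number of up-down permutations σ of length 2n+1 with mmp^{(1,0,0,0)}(σ) = n is exactly (2n)!! = 2·4·6⋯(2n), and moreover mmp^{(1,0,0,0)}(σ) ≥ n for every up-down permutation of length 2n+1. -/
open Finset

/-- Number of indices `i` such that there exists `j > i` with `σ j > σ i`
    (the statistic mmp^{(1,0,0,0)}). -/
noncomputable def mmp1000 {n : ℕ} (σ : Equiv.Perm (Fin n)) : ℕ :=
  (Finset.univ.filter (fun i : Fin n => ∃ j : Fin n, i < j ∧ σ i < σ j)).card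

/-- Number of indices `i` such that there exists `j < i` with `σ j > σ i`
    (the statistic mmp^{(0,1,0,0)}). -/
noncomputable def mmp0100 {n : ℕ} (σ : Equiv.Perm (Fin n)) : ℕ :=
  (Finset.univ.filter (fun i : Fin n => ∃ j : Fin n, j < i ∧ σ i < σ j)).card

/-- Number of indices `i` such that there exists `j > i` with `σ j < σ i`
    (the statistic mmp^{(0,0,0,1)}). -/
noncomputable def mmp0001 {n : ℕ} (σ : Equiv.Perm (Fin n)) : ℕ :=
  (Finset.univ.filter (fun i : Fin n => ∃ j : Fin n, i < j ∧ σ j < σ i)).card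

/-- σ is up-down: σ(1) < σ(2) > σ(3) < σ(4) > ⋯ (0-indexed: ascent at even indices). -/
def IsUpDown {n : ℕ} (σ : Equiv.Perm (Fin n)) : Prop :=
  ∀ i : Fin n, ∀ h : (i : ℕ) + 1 < n,
    if (i : ℕ) % 2 = 0 then σ i < σ ⟨(i : ℕ) + 1, h⟩ else σ ⟨(i : ℕ) + 1, h⟩ < σ i

/-- σ is down-up: σ(1) > σ(2) < σ(3) > σ(4) < ⋯ (0-indexed: descent at even indices). -/
def IsDownUp {n : ℕ} (σ : Equiv.Perm (Fin n)) : Prop :=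
  ∀ i : Fin n, ∀ h : (i : ℕ) + 1 < n,
    if (i : ℕ) % 2 = 0 then σ ⟨(i : ℕ) + 1, h⟩ < σ i else σ i < σ ⟨(i : ℕ) + 1, h⟩

open scoped Classical in
/-- The set of up-down permutations of length `m`. -/
noncomputable def UDset (m : ℕ) : Finset (Equiv.Perm (Fin m)) :=
  Finset.univ.filter (fun σ => IsUpDown σ)

open scoped Classical in
/-- The set of down-up permutations of length `m`. -/
noncomputable def DUset (m : ℕ) : Finset (Equiv.Perm (Fin m)) :=
  Finset.univ.filter (fun σ => IsDownUp σ)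

/-- The reverse of σ: σ^r(i) = σ(n+1-i). -/
def permReverse {n : ℕ} (σ : Equiv.Perm (Fin n)) : Equiv.Perm (Fin n) :=
  Fin.revPerm.trans σ

/-- The complement of σ: σ^c(i) = n+1-σ(i). -/
def permComplement {n : ℕ} (σ : Equiv.Perm (Fin n)) : Equiv.Perm (Fin n) :=
  σ.trans Fin.revPerm

/-- A_{2n}(x) = Σ_{σ ∈ UD_{2n}} x^{mmp^{(1,0,0,0)}(σ)}. -/
noncomputable def Apoly (n : ℕ) (x : ℤ) : ℤ :=
  ∑ σ ∈ UDset (2 * n), x ^ mmp1000 σ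

/-- B_{2n+1}(x) = Σ_{σ ∈ UD_{2n+1}} x^{mmp^{(1,0,0,0)}(σ)}. -/
noncomputable def Bpoly (n : ℕ) (x : ℤ) : ℤ :=
  ∑ σ ∈ UDset (2 * n + 1), x ^ mmp1000 σ

/-- C_{2n}(x) = Σ_{σ ∈ DU_{2n}} x^{mmp^{(1,0,0,0)}(σ)}. -/
noncomputable def Cpoly (n : ℕ) (x : ℤ) : ℤ :=
  ∑ σ ∈ DUset (2 * n), x ^ mmp1000 σ

/-- D_{2n+1}(x) = Σ_{σ ∈ DU_{2n+1}} x^{mmp^{(1,0,0,0)}(σ)}. -/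
noncomputable def Dpoly (n : ℕ) (x : ℤ) : ℤ :=
  ∑ σ ∈ DUset (2 * n + 1), x ^ mmp1000 σ

/-- Number of up-down permutations of length m. -/
noncomputable def udCount (m : ℕ) : ℕ := (UDset m).card

/-- Number of down-up permutations of length m. -/
noncomputable def duCount (m : ℕ) : ℕ := (DUset m).card

open scoped Classical in
/-- |{σ ∈ UD_{2m} : mmp^{(1,0,0,0)}(σ) = c}|. -/
noncomputable def AcountEq (m c : ℕ) : ℕ :=
  ((UDset (2 * m)).filter (fun σ => mmp1000 σ = c)).card

open scoped Classical in
/-- |{σ ∈ DU_{2m+1} : mmp^{(1,0,0,0)}(σ) = c}|. -/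
noncomputable def DcountEq (m c : ℕ) : ℕ :=
  ((DUset (2 * m + 1)).filter (fun σ => mmp1000 σ = c)).card

open scoped Classical in
/-- |{σ ∈ UD_{2m+1} : mmp^{(1,0,0,0)}(σ) = c}|. -/
noncomputable def BcountEq (m c : ℕ) : ℕ :=
  ((UDset (2 * m + 1)).filter (fun σ => mmp1000 σ = c)).card

open scoped Classical in
/-- |{σ ∈ DU_{2m} : mmp^{(1,0,0,0)}(σ) = c}|. -/
noncomputable def CcountEq (m c : ℕ) : ℕ :=
  ((DUset (2 * m)).filter (fun σ => mmp1000 σ = c)).card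

/-!
In an up-down permutation of length `m` every even position `i` with `i + 1 < m` has the
larger entry `σ (i + 1)` to its right, so `mmp1000 σ ≥ m / 2`. Equality holds exactly when, in
addition, every peak (odd position) is a right-to-left maximum. In such a permutation the first
peak is the overall maximum, the first entry is any of the remaining `m - 1` values, and what
follows the first peak is again of the same kind on the values left over. Counting lists of
distinct values from an arbitrary finite linear order, this gives the recursion
`c (k + 2) = (k + 1) * c k`, hence `(m - 1)‼` such permutations.
-/

open scoped Nat

variable {α : Type*} [LinearOrder α]

def IsRLMaxUpDown : List α → Prop
  | x :: a :: L => x < a ∧ (∀ b ∈ L, b < a) ∧ IsRLMaxUpDown L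
  | _ => True

theorem isRLMaxUpDown_iff_getElem {L : List α} :
    IsRLMaxUpDown L ↔
      (∀ i j (hij : i < j) (hj : j < L.length), i % 2 = 1 → L[j] < L[i]) ∧
      (∀ i (hi : i + 1 < L.length), i % 2 = 0 → L[i] < L[i + 1]) := by
  induction L using List.twoStepInduction with
  | nil => simp [IsRLMaxUpDown]
  | singleton x =>
    simp only [IsRLMaxUpDown, List.length_singleton, true_iff]
    constructor <;> intros <;> omega
  | cons_cons x a L ih _ =>
    rw [IsRLMaxUpDown, ih]
    constructor
    · rintro ⟨hxa, hdom, hdec, hasc⟩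
      refine ⟨fun i j hij hj hi => ?_, fun i hi he => ?_⟩
      · match i, j with
        | 1, j + 2 => exact hdom _ (List.getElem_mem _)
        | i + 2, j + 2 => exact hdec i j (by omega) (by simpa using hj) (by omega)
      · match i with
        | 0 => exact hxa
        | i + 2 => exact hasc i (by simp only [List.length_cons] at hi; omega) (by omega)
    · rintro ⟨hdec, hasc⟩
      refine ⟨hasc 0 (by simp) rfl, fun b hb => ?_, fun i j hij hj hi => ?_, fun i hi he => ?_⟩
      · obtain ⟨k, hk, rfl⟩ := List.getElem_of_mem hb
        exact hdec 1 (k + 2) (by omega) (by simpa using hk) rfl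
      · exact hdec (i + 2) (j + 2) (by omega) (by simpa using hj) (by omega)
      · exact hasc (i + 2) (by simp only [List.length_cons] at hi ⊢; omega) (by omega)

open scoped Classical in
noncomputable def rlMaxUpDownLists (s : Finset α) : Finset (List α) :=
  s.val.lists.toFinset.filter IsRLMaxUpDown

theorem mem_rlMaxUpDownLists {s : Finset α} {L : List α} :
    L ∈ rlMaxUpDownLists s ↔ s.val = L ∧ IsRLMaxUpDown L := by
  simp [rlMaxUpDownLists]

theorem rlMaxUpDownLists_empty : rlMaxUpDownLists (∅ : Finset α) = {[]} := by
  ext L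
  rw [mem_rlMaxUpDownLists, mem_singleton, empty_val, eq_comm, Multiset.coe_eq_zero]
  exact and_iff_left_of_imp fun h => h ▸ trivial

theorem rlMaxUpDownLists_singleton (a : α) : rlMaxUpDownLists {a} = {[a]} := by
  ext L
  rw [mem_rlMaxUpDownLists, mem_singleton, singleton_val, ← Multiset.coe_singleton,
    Multiset.coe_eq_coe, List.singleton_perm, eq_comm]
  exact and_iff_left_of_imp fun h => h ▸ trivial

theorem rlMaxUpDownLists_insert_max {a : α} {t : Finset α} (ht : ∀ b ∈ t, b < a)
    (hne : t.Nonempty) :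
    rlMaxUpDownLists (insert a t) =
      t.biUnion fun x => (rlMaxUpDownLists (t.erase x)).image (x :: a :: ·) := by
  have hat : a ∉ t := fun h => (ht a h).false
  ext L
  simp only [mem_rlMaxUpDownLists, mem_biUnion, mem_image, insert_val_of_notMem hat]
  constructor
  · rintro ⟨hL, hgood⟩
    have hlen : L.length = #t + 1 := by simpa using (congrArg Multiset.card hL).symm
    obtain ⟨x, b, L, rfl⟩ : ∃ x b L', L = x :: b :: L' := by
      rcases L with _ | ⟨x, _ | ⟨b, L⟩⟩
      · simp at hlen
      · have := hne.card_pos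
        simp only [List.length_singleton] at hlen
        omega
      · exact ⟨x, b, L, rfl⟩
    obtain ⟨hxb, hdom, hgood⟩ := hgood
    have hmem : ∀ c, c = a ∨ c ∈ t ↔ c = x ∨ c = b ∨ c ∈ L := fun c => by
      simpa using congrArg (c ∈ ·) hL
    have hba : b = a := by
      by_contra hba
      have hbt : b ∈ t := ((hmem b).mpr (Or.inr (Or.inl rfl))).resolve_left hba
      rcases (hmem a).mp (Or.inl rfl) with rfl | rfl | haL
      · exact lt_asymm hxb (ht b hbt)
      · exact hba rfl
      · exact lt_asymm (hdom a haL) (ht b hbt)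
    subst hba
    have hxt : x ∈ t := ((hmem x).mpr (Or.inl rfl)).resolve_left hxb.ne
    have htL : t.val = x ::ₘ L :=
      (Multiset.cons_inj_right b).mp (by rw [hL, Multiset.cons_swap]; rfl)
    refine ⟨x, hxt, L, ⟨?_, hgood⟩, rfl⟩
    rw [erase_val, htL, Multiset.erase_cons_head]
  · rintro ⟨x, hx, L, ⟨hL, hgood⟩, rfl⟩
    refine ⟨?_, ht x hx, fun c hc => ht c ?_, hgood⟩
    · rw [← Multiset.cons_erase (mem_val.mpr hx), ← erase_val, hL, Multiset.cons_swap]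
      rfl
    · exact mem_of_mem_erase (by rw [← mem_val, hL]; exact hc)

theorem card_rlMaxUpDownLists (s : Finset α) : #(rlMaxUpDownLists s) = (#s - 1)‼ := by
  induction hs : #s using Nat.twoStepInduction generalizing s with
  | zero => simp [card_eq_zero.mp hs, rlMaxUpDownLists_empty]
  | one =>
    obtain ⟨a, rfl⟩ := card_eq_one.mp hs
    simp [rlMaxUpDownLists_singleton]
  | more n ih _ =>
    have hne : s.Nonempty := card_pos.mp (by omega)
    set a := s.max' hne
    set t := s.erase a
    have ht : ∀ b ∈ t, b < a := fun b hb =>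
      lt_of_le_of_ne (le_max' s b (mem_of_mem_erase hb)) (ne_of_mem_erase hb)
    have htcard : #t = n + 1 := by rw [card_erase_of_mem (max'_mem s hne), hs]; rfl
    have hterm : ∀ x ∈ t, #((rlMaxUpDownLists (t.erase x)).image (x :: a :: ·)) = (n - 1)‼ :=
      fun x hx => by
        rw [card_image_of_injective _ fun _ _ h => by simpa using h]
        exact ih (t.erase x) (by rw [card_erase_of_mem hx, htcard]; rfl)
    rw [← insert_erase (max'_mem s hne), rlMaxUpDownLists_insert_max ht (card_pos.mp (by omega)),
      card_biUnion, sum_congr rfl hterm, sum_const, htcard, smul_eq_mul,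
      ← Nat.doubleFactorial_add_one]
    · rfl
    · intro x _ y _ hxy
      simp only [Function.onFun, disjoint_left, mem_image]
      rintro _ ⟨L, -, rfl⟩ ⟨L', -, h⟩
      exact hxy (List.cons_eq_cons.mp h).1.symm

section Perm

variable {m : ℕ}

theorem isRLMaxUpDown_ofFn_iff {f : Fin m → α} :
    IsRLMaxUpDown (List.ofFn f) ↔
      (∀ i j : Fin m, i < j → (i : ℕ) % 2 = 1 → f j < f i) ∧
      (∀ (i : Fin m) (h : (i : ℕ) + 1 < m), (i : ℕ) % 2 = 0 → f i < f ⟨i + 1, h⟩) := by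
  simp only [isRLMaxUpDown_iff_getElem, List.length_ofFn, List.getElem_ofFn]
  constructor
  · rintro ⟨hdec, hasc⟩
    exact ⟨fun i j hij => hdec i j hij j.isLt, fun i => hasc i⟩
  · rintro ⟨hdec, hasc⟩
    exact ⟨fun i j hij hj => hdec ⟨i, by omega⟩ ⟨j, hj⟩ hij,
      fun i h => hasc ⟨i, by omega⟩ h⟩

def evenNonLastIndices (m : ℕ) : Finset (Fin m) :=
  {i | (i : ℕ) % 2 = 0 ∧ (i : ℕ) + 1 < m}

theorem card_evenNonLastIndices (m : ℕ) : #(evenNonLastIndices m) = m / 2 := by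
  rw [← card_range (m / 2)]
  refine (card_bij (fun k hk => ⟨2 * k, by rw [mem_range] at hk; omega⟩) ?_ ?_ ?_).symm
  · intro k hk
    simp only [mem_range] at hk
    simp only [evenNonLastIndices, mem_filter, mem_univ, true_and]
    omega
  · intro k _ l _ h
    simp only [Fin.mk.injEq] at h
    omega
  · intro i hi
    simp only [evenNonLastIndices, mem_filter, mem_univ, true_and] at hi
    exact ⟨i / 2, by rw [mem_range]; omega, Fin.ext (by simp only; omega)⟩

theorem evenNonLastIndices_subset {σ : Equiv.Perm (Fin m)} (hσ : IsUpDown σ) :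
    evenNonLastIndices m ⊆ univ.filter fun i => ∃ j, i < j ∧ σ i < σ j := by
  intro i hi
  simp only [evenNonLastIndices, mem_filter, mem_univ, true_and] at hi ⊢
  have := hσ i hi.2
  rw [if_pos hi.1] at this
  exact ⟨⟨i + 1, hi.2⟩, Fin.lt_def.mpr (Nat.lt_succ_self i), this⟩

theorem div_two_le_mmp1000 {σ : Equiv.Perm (Fin m)} (hσ : IsUpDown σ) :
    m / 2 ≤ mmp1000 σ := by
  rw [← card_evenNonLastIndices]
  exact card_le_card (evenNonLastIndices_subset hσ)

theorem isUpDown_and_mmp1000_eq_iff {σ : Equiv.Perm (Fin m)} :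
    IsUpDown σ ∧ mmp1000 σ = m / 2 ↔ IsRLMaxUpDown (List.ofFn σ) := by
  rw [isRLMaxUpDown_ofFn_iff]
  constructor
  · rintro ⟨hσ, hmmp⟩
    have hlarger : (univ.filter fun i => ∃ j, i < j ∧ σ i < σ j) = evenNonLastIndices m :=
      (eq_of_subset_of_card_le (evenNonLastIndices_subset hσ)
        (by rw [card_evenNonLastIndices, ← hmmp]; rfl)).symm
    refine ⟨fun i j hij hi => ?_, fun i h hi => by simpa [hi] using hσ i h⟩
    have : i ∉ univ.filter fun i => ∃ j, i < j ∧ σ i < σ j := by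
      simp only [hlarger, evenNonLastIndices, mem_filter, mem_univ, true_and]
      omega
    simp only [mem_filter, mem_univ, true_and, not_exists, not_and, not_lt] at this
    exact lt_of_le_of_ne (this j hij) (σ.injective.ne hij.ne')
  · rintro ⟨hdec, hasc⟩
    have hσ : IsUpDown σ := fun i h => by
      split_ifs with hi
      · exact hasc i h hi
      · exact hdec i _ (Fin.lt_def.mpr (Nat.lt_succ_self i)) (by omega)
    refine ⟨hσ, ?_⟩
    rw [← card_evenNonLastIndices]
    refine congrArg card (Subset.antisymm (fun i hi => ?_) (evenNonLastIndices_subset hσ))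
    simp only [mem_filter, mem_univ, true_and] at hi
    obtain ⟨j, hij, hlt⟩ := hi
    simp only [evenNonLastIndices, mem_filter, mem_univ, true_and]
    have := Fin.lt_def.mp hij
    refine ⟨?_, by omega⟩
    by_contra hi
    exact lt_asymm hlt (hdec i j hij (by omega))

open scoped Classical in
theorem card_filter_isRLMaxUpDown_ofFn (m : ℕ) :
    #{σ : Equiv.Perm (Fin m) | IsRLMaxUpDown (List.ofFn σ)} = (m - 1)‼ := by
  have hcount := card_rlMaxUpDownLists (univ : Finset (Fin m))
  rw [card_univ, Fintype.card_fin] at hcount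
  rw [← hcount]
  refine card_bij (fun σ _ => List.ofFn σ) (fun σ hσ => ?_) ?_ (fun L hL => ?_)
  · rw [mem_filter] at hσ
    refine mem_rlMaxUpDownLists.mpr ⟨?_, hσ.2⟩
    rw [Multiset.Nodup.ext univ.nodup (Multiset.coe_nodup.mpr (List.nodup_ofFn.mpr σ.injective))]
    simpa using fun i => σ.surjective i
  · intro σ _ τ _ h
    exact Equiv.ext (congrFun (List.ofFn_injective h))
  · obtain ⟨hL, hgood⟩ := mem_rlMaxUpDownLists.mp hL
    have hnd : L.Nodup := Multiset.coe_nodup.mp (hL ▸ univ.nodup)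
    have hlen : L.length = m := by simpa using congrArg Multiset.card hL.symm
    have hall : ∀ i, i ∈ L := fun i => Multiset.mem_coe.mp (hL ▸ mem_univ i)
    let σ := (finCongr hlen.symm).trans (hnd.getEquivOfForallMemList L hall)
    have hσ : List.ofFn σ = L := List.ext_getElem (by simp [hlen]) fun i _ _ => by simp [σ]
    exact ⟨σ, by simpa [hσ] using hgood, hσ⟩

open scoped Classical in
theorem card_isUpDown_mmp1000_eq_div_two (m : ℕ) :
    #{σ : Equiv.Perm (Fin m) | IsUpDown σ ∧ mmp1000 σ = m / 2} = (m - 1)‼ := by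
  rw [← card_filter_isRLMaxUpDown_ofFn m]
  exact congrArg card (filter_congr fun σ _ => isUpDown_and_mmp1000_eq_iff)

end Perm

theorem stmt9_general (n : ℕ) :
    BcountEq n n = Nat.doubleFactorial (2 * n) ∧
    ∀ σ : Equiv.Perm (Fin (2 * n + 1)), IsUpDown σ → n ≤ mmp1000 σ := by
  have hhalf : (2 * n + 1) / 2 = n := by omega
  refine ⟨?_, fun σ hσ => hhalf.symm.trans_le (div_two_le_mmp1000 hσ)⟩
  have hcount := card_isUpDown_mmp1000_eq_div_two (2 * n + 1)
  rw [hhalf, Nat.add_sub_cancel] at hcount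
  rw [BcountEq, UDset, filter_filter, ← hcount]

theorem stmt9 (n : ℕ) (hn : 1 ≤ n) :
    BcountEq n n = Nat.doubleFactorial (2 * n) ∧
    ∀ σ : Equiv.Perm (Fin (2 * n + 1)), IsUpDown σ → n ≤ mmp1000 σ :=
  stmt9_general n
end

section
/- For all n ≥ 1, every down-up permutation σ of length 2n satisfies mmp^{(1,0,0,0)}(σ) ≥ n-1, and the number of down-up permutations of length 2n with mmp^{(1,0,0,0)}(σ) = n-1 is exactly (2n-2)!!. -/
open Finset

section Stmt10Aux

def Qp {m : ℕ} (σ : Equiv.Perm (Fin m)) : Prop :=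
  ∀ i j : Fin m, (i : ℕ) % 2 = 0 → i < j → σ j < σ i

lemma Qp_zero {m : ℕ} (hm : 0 < m) {σ : Equiv.Perm (Fin m)} (hQ : Qp σ) :
    ((σ ⟨0, hm⟩ : Fin m) : ℕ) = m - 1 := by
  have hall : ∀ y : Fin m, (y : ℕ) ≤ ((σ ⟨0, hm⟩ : Fin m) : ℕ) := by
    intro y
    rcases eq_or_ne (σ.symm y) ⟨0, hm⟩ with h | h
    · have : σ ⟨0, hm⟩ = y := by rw [← h]; simp
      rw [this]
    · have h0 : (⟨0, hm⟩ : Fin m) < σ.symm y := by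
        rw [Fin.lt_def]
        have : ((σ.symm y : Fin m) : ℕ) ≠ 0 := fun hc => h (Fin.ext hc)
        simp; omega
      have hlt := hQ ⟨0, hm⟩ (σ.symm y) (by simp) h0
      rw [Equiv.apply_symm_apply] at hlt
      exact Nat.le_of_lt (Fin.lt_def.mp hlt)
  have h1 := hall ⟨m - 1, by omega⟩
  have h2 := (σ ⟨0, hm⟩).isLt
  simp at h1
  omega

def Oset (n : ℕ) : Finset (Fin (2 * n)) :=
  Finset.univ.filter (fun i => (i : ℕ) % 2 = 1 ∧ (i : ℕ) + 1 < 2 * n)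

lemma card_Oset (n : ℕ) : (Oset n).card = n - 1 := by
  have himg : Oset n =
      Finset.image (fun k : Fin (n - 1) => (⟨2 * (k : ℕ) + 1, by have := k.isLt; omega⟩ : Fin (2 * n)))
        Finset.univ := by
    ext i
    simp only [Oset, Finset.mem_filter, Finset.mem_univ, true_and, Finset.mem_image]
    constructor
    · rintro ⟨h1, h2⟩
      refine ⟨⟨(i : ℕ) / 2, by omega⟩, ?_⟩
      apply Fin.ext; simp; omega
    · rintro ⟨k, rfl⟩
      have := k.isLt
      simp; omega
  rw [himg, Finset.card_image_of_injective _ (fun a b hab => by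
    apply Fin.ext
    have := congrArg (fun x : Fin (2 * n) => (x : ℕ)) hab
    simp at this; omega)]
  simp

lemma O_subset_M {n : ℕ} {σ : Equiv.Perm (Fin (2 * n))} (hdu : IsDownUp σ) :
    Oset n ⊆ Finset.univ.filter (fun i : Fin (2 * n) => ∃ j : Fin (2 * n), i < j ∧ σ i < σ j) := by
  intro i hi
  simp only [Oset, Finset.mem_filter, Finset.mem_univ, true_and] at hi ⊢
  obtain ⟨h1, h2⟩ := hi
  refine ⟨⟨(i : ℕ) + 1, h2⟩, by rw [Fin.lt_def]; simp, ?_⟩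
  have := hdu i h2
  rwa [if_neg (by omega)] at this

lemma mmp_lower {n : ℕ} {σ : Equiv.Perm (Fin (2 * n))} (hdu : IsDownUp σ) :
    n - 1 ≤ mmp1000 σ := by
  rw [mmp1000, ← card_Oset n]
  exact Finset.card_le_card (O_subset_M hdu)

lemma mmp_eq_iff {n : ℕ} {σ : Equiv.Perm (Fin (2 * n))} (hdu : IsDownUp σ) :
    mmp1000 σ = n - 1 ↔ Qp σ := by
  constructor
  · intro he i j hev hij
    by_contra hc
    have hne : σ i ≠ σ j := fun h => (Fin.lt_irrefl j) (by
      have := σ.injective h; exact absurd this (by intro h'; subst h'; exact lt_irrefl _ hij))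
    have hij' : σ i < σ j := by
      rcases lt_trichotomy (σ i) (σ j) with h | h | h
      · exact h
      · exact absurd h hne
      · exact absurd h hc
    have hiM : i ∈ Finset.univ.filter
        (fun i : Fin (2 * n) => ∃ j : Fin (2 * n), i < j ∧ σ i < σ j) :=
      Finset.mem_filter.mpr ⟨Finset.mem_univ _, ⟨j, hij, hij'⟩⟩
    have hMO : (Finset.univ.filter
        (fun i : Fin (2 * n) => ∃ j : Fin (2 * n), i < j ∧ σ i < σ j)) = Oset n := by
      refine (Finset.eq_of_subset_of_card_le (O_subset_M hdu) ?_).symm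
      rw [card_Oset]
      exact le_of_eq he
    rw [hMO] at hiM
    simp only [Oset, Finset.mem_filter] at hiM
    omega
  · intro hQ
    refine le_antisymm ?_ (mmp_lower hdu)
    rw [mmp1000, ← card_Oset n]
    apply Finset.card_le_card
    intro i hi
    simp only [Finset.mem_filter, Finset.mem_univ, true_and] at hi
    obtain ⟨j, hij, hlt⟩ := hi
    simp only [Oset, Finset.mem_filter, Finset.mem_univ, true_and]
    constructor
    · rcases Nat.even_or_odd (i : ℕ) with h | h
      · exact absurd hlt (not_lt_of_gt (hQ i j (Nat.even_iff.mp h) hij))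
      · exact Nat.odd_iff.mp h
    · have := j.isLt
      have := Fin.lt_def.mp hij
      omega

open scoped Classical in
noncomputable def Tset (n : ℕ) : Finset (Equiv.Perm (Fin (2 * n))) :=
  (DUset (2 * n)).filter (fun σ => Qp σ)

lemma mem_Tset {n : ℕ} {σ : Equiv.Perm (Fin (2 * n))} :
    σ ∈ Tset n ↔ IsDownUp σ ∧ Qp σ := by
  simp [Tset, DUset, and_assoc]

/-- nat-level "skip v" map -/
def Sf (v y : ℕ) : ℕ := if y < v then y else y + 1

def Sinv (v y : ℕ) : ℕ := if y < v then y else y - 1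

lemma Sf_lt {v y y' : ℕ} (h : y < y') : Sf v y < Sf v y' := by
  unfold Sf; split_ifs <;> omega

lemma Sf_inj {v y y' : ℕ} (h : Sf v y = Sf v y') : y = y' := by
  unfold Sf at h; split_ifs at h <;> omega

lemma Sf_ne {v y : ℕ} : Sf v y ≠ v := by unfold Sf; split_ifs <;> omega

lemma Sf_le {v y : ℕ} : Sf v y ≤ y + 1 := by unfold Sf; split_ifs <;> omega

lemma Sf_Sinv {v y : ℕ} (h : y ≠ v) : Sf v (Sinv v y) = y := by
  unfold Sf Sinv; split_ifs <;> omega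

lemma Sinv_lt {v y y' : ℕ} (hy : y ≠ v) (hy' : y' ≠ v) (h : y < y') :
    Sinv v y < Sinv v y' := by
  unfold Sinv; split_ifs <;> omega

def bfun (n : ℕ) (v : Fin (2 * n)) (τ : Equiv.Perm (Fin (2 * n)))
    (i : Fin (2 * n + 2)) : Fin (2 * n + 2) :=
  if h2 : 2 ≤ (i : ℕ) then
    ⟨Sf (v : ℕ) ((τ ⟨(i : ℕ) - 2, by have := i.isLt; omega⟩ : Fin (2 * n)) : ℕ), by
      have h := (τ ⟨(i : ℕ) - 2, by have := i.isLt; omega⟩).isLt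
      unfold Sf; split <;> omega⟩
  else if (i : ℕ) = 0 then ⟨2 * n + 1, by omega⟩
  else ⟨(v : ℕ), by have := v.isLt; omega⟩

lemma bfun_val0 {n : ℕ} {v : Fin (2 * n)} {τ : Equiv.Perm (Fin (2 * n))}
    {i : Fin (2 * n + 2)} (h : (i : ℕ) = 0) : ((bfun n v τ i : Fin (2 * n + 2)) : ℕ) = 2 * n + 1 := by
  unfold bfun; rw [dif_neg (by omega), if_pos h]

lemma bfun_val1 {n : ℕ} {v : Fin (2 * n)} {τ : Equiv.Perm (Fin (2 * n))}
    {i : Fin (2 * n + 2)} (h : (i : ℕ) = 1) : ((bfun n v τ i : Fin (2 * n + 2)) : ℕ) = (v : ℕ) := by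
  unfold bfun; rw [dif_neg (by omega), if_neg (by omega)]

lemma bfun_val2 {n : ℕ} {v : Fin (2 * n)} {τ : Equiv.Perm (Fin (2 * n))}
    {i : Fin (2 * n + 2)} (x : Fin (2 * n)) (hix : (i : ℕ) = (x : ℕ) + 2) :
    ((bfun n v τ i : Fin (2 * n + 2)) : ℕ) = Sf (v : ℕ) ((τ x : Fin (2 * n)) : ℕ) := by
  unfold bfun
  rw [dif_pos (by omega)]
  have he : (⟨(i : ℕ) - 2, by have := i.isLt; omega⟩ : Fin (2 * n)) = x := Fin.ext (by simp; omega)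
  exact congrArg (fun z : Fin (2 * n) => Sf (v : ℕ) ((τ z : Fin (2 * n)) : ℕ)) he

lemma bfun_val2' {n : ℕ} {v : Fin (2 * n)} {τ : Equiv.Perm (Fin (2 * n))}
    {i : Fin (2 * n + 2)} (h2 : 2 ≤ (i : ℕ)) (p : (i : ℕ) - 2 < 2 * n) :
    ((bfun n v τ i : Fin (2 * n + 2)) : ℕ)
      = Sf (v : ℕ) ((τ ⟨(i : ℕ) - 2, p⟩ : Fin (2 * n)) : ℕ) := by
  unfold bfun
  rw [dif_pos h2]

lemma bfun_inj (n : ℕ) (v : Fin (2 * n)) (τ : Equiv.Perm (Fin (2 * n))) :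
    Function.Injective (bfun n v τ) := by
  intro a b hab
  have hv := v.isLt
  have ha2 := a.isLt
  have hb2 := b.isLt
  have hval := congrArg (fun x : Fin (2 * n + 2) => (x : ℕ)) hab
  apply Fin.ext
  rcases show ((a : ℕ) = 0 ∨ (a : ℕ) = 1 ∨ 2 ≤ (a : ℕ)) from by omega with ha | ha | ha <;>
    rcases show ((b : ℕ) = 0 ∨ (b : ℕ) = 1 ∨ 2 ≤ (b : ℕ)) from by omega with hb | hb | hb
  · omega
  · rw [bfun_val0 ha, bfun_val1 hb] at hval; omega
  · rw [bfun_val0 ha, bfun_val2' hb (by omega)] at hval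
    have h1 := (τ ⟨(b : ℕ) - 2, by omega⟩).isLt
    have h2 := @Sf_le (v : ℕ) ((τ ⟨(b : ℕ) - 2, by omega⟩ : Fin (2 * n)) : ℕ)
    omega
  · rw [bfun_val1 ha, bfun_val0 hb] at hval; omega
  · omega
  · rw [bfun_val1 ha, bfun_val2' hb (by omega)] at hval
    exact absurd hval.symm Sf_ne
  · rw [bfun_val2' ha (by omega), bfun_val0 hb] at hval
    have h1 := (τ ⟨(a : ℕ) - 2, by omega⟩).isLt
    have h2 := @Sf_le (v : ℕ) ((τ ⟨(a : ℕ) - 2, by omega⟩ : Fin (2 * n)) : ℕ)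
    omega
  · rw [bfun_val2' ha (by omega), bfun_val1 hb] at hval
    exact absurd hval Sf_ne
  · rw [bfun_val2' ha (by omega), bfun_val2' hb (by omega)] at hval
    have := Fin.ext_iff.mp (τ.injective (Fin.ext (Sf_inj hval)))
    simp at this
    omega

noncomputable def buildPerm (n : ℕ) (v : Fin (2 * n)) (τ : Equiv.Perm (Fin (2 * n))) :
    Equiv.Perm (Fin (2 * n + 2)) :=
  Equiv.ofBijective _ (Finite.injective_iff_bijective.mp (bfun_inj n v τ))

lemma buildPerm_apply (n : ℕ) (v : Fin (2 * n)) (τ : Equiv.Perm (Fin (2 * n)))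
    (i : Fin (2 * n + 2)) : buildPerm n v τ i = bfun n v τ i := rfl

lemma bp_val0 {n : ℕ} {v : Fin (2 * n)} {τ : Equiv.Perm (Fin (2 * n))}
    {i : Fin (2 * n + 2)} (h : (i : ℕ) = 0) :
    ((buildPerm n v τ i : Fin (2 * n + 2)) : ℕ) = 2 * n + 1 := bfun_val0 h

lemma bp_val1 {n : ℕ} {v : Fin (2 * n)} {τ : Equiv.Perm (Fin (2 * n))}
    {i : Fin (2 * n + 2)} (h : (i : ℕ) = 1) :
    ((buildPerm n v τ i : Fin (2 * n + 2)) : ℕ) = (v : ℕ) := bfun_val1 h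

lemma bp_val2 {n : ℕ} {v : Fin (2 * n)} {τ : Equiv.Perm (Fin (2 * n))}
    {i : Fin (2 * n + 2)} (x : Fin (2 * n)) (hix : (i : ℕ) = (x : ℕ) + 2) :
    ((buildPerm n v τ i : Fin (2 * n + 2)) : ℕ) = Sf (v : ℕ) ((τ x : Fin (2 * n)) : ℕ) :=
  bfun_val2 x hix

lemma isDownUp_elim {m : ℕ} {σ : Equiv.Perm (Fin m)} (h : IsDownUp σ)
    (a b : ℕ) (pa : a < m) (pb : b < m) (hba : b = a + 1) :
    (a % 2 = 0 → ((σ ⟨b, pb⟩ : Fin m) : ℕ) < ((σ ⟨a, pa⟩ : Fin m) : ℕ)) ∧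
    (a % 2 ≠ 0 → ((σ ⟨a, pa⟩ : Fin m) : ℕ) < ((σ ⟨b, pb⟩ : Fin m) : ℕ)) := by
  subst hba
  have hh := h ⟨a, pa⟩ (show (( ⟨a, pa⟩ : Fin m) : ℕ) + 1 < m from pb)
  constructor <;> intro hp
  · rw [if_pos hp] at hh; exact Fin.lt_def.mp hh
  · rw [if_neg hp] at hh; exact Fin.lt_def.mp hh

lemma isDownUp_intro {m : ℕ} {σ : Equiv.Perm (Fin m)}
    (h : ∀ a b (pa : a < m) (pb : b < m), b = a + 1 →
      (a % 2 = 0 → ((σ ⟨b, pb⟩ : Fin m) : ℕ) < ((σ ⟨a, pa⟩ : Fin m) : ℕ)) ∧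
      (a % 2 ≠ 0 → ((σ ⟨a, pa⟩ : Fin m) : ℕ) < ((σ ⟨b, pb⟩ : Fin m) : ℕ))) :
    IsDownUp σ := by
  intro i hi
  by_cases hp : (i : ℕ) % 2 = 0
  · rw [if_pos hp]
    exact Fin.lt_def.mpr ((h (i : ℕ) ((i : ℕ) + 1) i.isLt hi rfl).1 hp)
  · rw [if_neg hp]
    exact Fin.lt_def.mpr ((h (i : ℕ) ((i : ℕ) + 1) i.isLt hi rfl).2 hp)

lemma Qp_elim {m : ℕ} {σ : Equiv.Perm (Fin m)} (h : Qp σ)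
    (a b : ℕ) (pa : a < m) (pb : b < m) (hab : a < b) (ha : a % 2 = 0) :
    ((σ ⟨b, pb⟩ : Fin m) : ℕ) < ((σ ⟨a, pa⟩ : Fin m) : ℕ) :=
  Fin.lt_def.mp (h ⟨a, pa⟩ ⟨b, pb⟩ ha (Fin.lt_def.mpr hab))

lemma Qp_intro {m : ℕ} {σ : Equiv.Perm (Fin m)}
    (h : ∀ a b (pa : a < m) (pb : b < m), a < b → a % 2 = 0 →
      ((σ ⟨b, pb⟩ : Fin m) : ℕ) < ((σ ⟨a, pa⟩ : Fin m) : ℕ)) : Qp σ :=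
  fun i j he hij => Fin.lt_def.mpr (h (i : ℕ) (j : ℕ) i.isLt j.isLt (Fin.lt_def.mp hij) he)

lemma buildPerm_mem {n : ℕ} (hn : 1 ≤ n) (v : Fin (2 * n)) {τ : Equiv.Perm (Fin (2 * n))}
    (hτ : τ ∈ Tset n) : IsDownUp (buildPerm n v τ) ∧ Qp (buildPerm n v τ) := by
  obtain ⟨hdu, hQ⟩ := mem_Tset.mp hτ
  have hv := v.isLt
  have hτ0 : ((τ ⟨0, by omega⟩ : Fin (2 * n)) : ℕ) = 2 * n - 1 := Qp_zero (by omega) hQ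
  constructor
  · apply isDownUp_intro
    intro a b pa pb hba
    subst hba
    rcases show a = 0 ∨ a = 1 ∨ 2 ≤ a from by omega with h0 | h1 | h2
    · subst h0
      constructor
      · intro _
        rw [bp_val1 (by simp), bp_val0 (by simp)]
        omega
      · intro hp; exact absurd rfl hp
    · subst h1
      constructor
      · intro hp; omega
      · intro _
        rw [bp_val1 (by simp)]
        rw [bp_val2 (⟨0, by omega⟩ : Fin (2 * n)) (by simp)]
        rw [hτ0]
        simp only [Sf]
        split <;> omega
    · constructor
      · intro hp
        rw [bp_val2 (⟨a - 1, by omega⟩ : Fin (2 * n)) (by simp; omega)]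
        rw [bp_val2 (⟨a - 2, by omega⟩ : Fin (2 * n)) (by simp; omega)]
        apply Sf_lt
        exact (isDownUp_elim hdu (a - 2) (a - 1) (by omega) (by omega) (by omega)).1 (by omega)
      · intro hp
        rw [bp_val2 (⟨a - 2, by omega⟩ : Fin (2 * n)) (by simp; omega)]
        rw [bp_val2 (⟨a - 1, by omega⟩ : Fin (2 * n)) (by simp; omega)]
        apply Sf_lt
        exact (isDownUp_elim hdu (a - 2) (a - 1) (by omega) (by omega) (by omega)).2 (by omega)
  · apply Qp_intro
    intro a b pa pb hab ha
    rcases show a = 0 ∨ 2 ≤ a from by omega with h0 | h2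
    · subst h0
      rw [bp_val0 (i := ⟨0, pa⟩) rfl]
      rcases show b = 1 ∨ 2 ≤ b from by omega with hb1 | hb2
      · subst hb1
        rw [bp_val1 (i := ⟨1, pb⟩) rfl]
        omega
      · rw [bp_val2 (⟨b - 2, by omega⟩ : Fin (2 * n)) (by simp; omega)]
        have h1 := (τ (⟨b - 2, by omega⟩ : Fin (2 * n))).isLt
        have h2 := @Sf_le (v : ℕ) ((τ (⟨b - 2, by omega⟩ : Fin (2 * n)) : Fin (2 * n)) : ℕ)
        omega
    · rw [bp_val2 (⟨b - 2, by omega⟩ : Fin (2 * n)) (by simp; omega)]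
      rw [bp_val2 (⟨a - 2, by omega⟩ : Fin (2 * n)) (by simp; omega)]
      exact Sf_lt (Qp_elim hQ (a - 2) (b - 2) (by omega) (by omega) (by omega) (by omega))

lemma exists_pre {n : ℕ} (hn : 1 ≤ n) {σ : Equiv.Perm (Fin (2 * n + 2))}
    (hdu : IsDownUp σ) (hQ : Qp σ) :
    ∃ (v : Fin (2 * n)) (τ : Equiv.Perm (Fin (2 * n))),
      (IsDownUp τ ∧ Qp τ) ∧ buildPerm n v τ = σ := by
  have p0 : 0 < 2 * n + 2 := by omega
  have p1 : 1 < 2 * n + 2 := by omega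
  have px : ∀ x : Fin (2 * n), (x : ℕ) + 2 < 2 * n + 2 := fun x => by have := x.isLt; omega
  have h0 : ((σ ⟨0, p0⟩ : Fin _) : ℕ) = 2 * n + 1 := by
    have := Qp_zero (m := 2 * n + 2) p0 hQ
    omega
  have hinj : ∀ (a b : ℕ) (pa : a < 2 * n + 2) (pb : b < 2 * n + 2),
      ((σ ⟨a, pa⟩ : Fin _) : ℕ) = ((σ ⟨b, pb⟩ : Fin _) : ℕ) → a = b := by
    intro a b pa pb h
    have h2 := σ.injective (Fin.ext h)
    simpa using congrArg Fin.val h2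
  have hlt : ∀ (a : ℕ) (pa : a < 2 * n + 2), a ≠ 0 → ((σ ⟨a, pa⟩ : Fin _) : ℕ) ≤ 2 * n := by
    intro a pa ha
    have hb := (σ ⟨a, pa⟩).isLt
    by_contra h
    exact ha (hinj a 0 pa p0 (by omega))
  have hσ1 : ((σ ⟨1, p1⟩ : Fin _) : ℕ) < 2 * n := by
    by_contra h
    have h12 := (isDownUp_elim hdu 1 2 p1 (by omega) rfl).2 (by omega)
    have h2le := hlt 2 (by omega) (by omega)
    have h1le := hlt 1 p1 (by omega)
    omega
  set vv : Fin (2 * n) := ⟨_, hσ1⟩ with hvv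
  have hvval : (vv : ℕ) = ((σ ⟨1, p1⟩ : Fin _) : ℕ) := rfl
  have hne : ∀ (a : ℕ) (pa : a < 2 * n + 2), a ≠ 1 → ((σ ⟨a, pa⟩ : Fin _) : ℕ) ≠ (vv : ℕ) := by
    intro a pa ha h
    exact ha (hinj a 1 pa p1 h)
  have hSb : ∀ x : Fin (2 * n),
      Sinv (vv : ℕ) ((σ ⟨(x : ℕ) + 2, px x⟩ : Fin _) : ℕ) < 2 * n := by
    intro x
    have h1 := hlt ((x : ℕ) + 2) (px x) (by omega)
    have h2 := hne ((x : ℕ) + 2) (px x) (by omega)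
    simp only [Sinv]
    split <;> omega
  set g : Fin (2 * n) → Fin (2 * n) := fun x => ⟨_, hSb x⟩ with hg
  have hginj : Function.Injective g := by
    intro x y hxy
    have h : Sinv (vv : ℕ) ((σ ⟨(x : ℕ) + 2, px x⟩ : Fin _) : ℕ)
        = Sinv (vv : ℕ) ((σ ⟨(y : ℕ) + 2, px y⟩ : Fin _) : ℕ) := congrArg Fin.val hxy
    have h1x := hlt ((x : ℕ) + 2) (px x) (by omega)
    have h1y := hlt ((y : ℕ) + 2) (px y) (by omega)
    have h2x := hne ((x : ℕ) + 2) (px x) (by omega)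
    have h2y := hne ((y : ℕ) + 2) (px y) (by omega)
    have hval : ((σ ⟨(x : ℕ) + 2, px x⟩ : Fin _) : ℕ)
        = ((σ ⟨(y : ℕ) + 2, px y⟩ : Fin _) : ℕ) := by
      simp only [Sinv] at h
      split_ifs at h <;> omega
    have hxy2 := hinj _ _ _ _ hval
    exact Fin.ext (by omega)
  set τ : Equiv.Perm (Fin (2 * n)) :=
    Equiv.ofBijective g (Finite.injective_iff_bijective.mp hginj) with hτ
  have hta : ∀ (a : ℕ) (pa : a < 2 * n),
      ((τ ⟨a, pa⟩ : Fin (2 * n)) : ℕ)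
        = Sinv (vv : ℕ) ((σ ⟨a + 2, by omega⟩ : Fin _) : ℕ) := fun a pa => rfl
  refine ⟨vv, τ, ⟨?_, ?_⟩, ?_⟩
  · apply isDownUp_intro
    intro a b pa pb hba
    subst hba
    constructor <;> intro hp
    · rw [hta (a + 1) pb, hta a pa]
      apply Sinv_lt (hne (a + 1 + 2) (by omega) (by omega)) (hne (a + 2) (by omega) (by omega))
      exact (isDownUp_elim hdu (a + 2) (a + 1 + 2) (by omega) (by omega) (by omega)).1 (by omega)
    · rw [hta a pa, hta (a + 1) pb]
      apply Sinv_lt (hne (a + 2) (by omega) (by omega)) (hne (a + 1 + 2) (by omega) (by omega))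
      exact (isDownUp_elim hdu (a + 2) (a + 1 + 2) (by omega) (by omega) (by omega)).2 (by omega)
  · apply Qp_intro
    intro a b pa pb hab ha
    rw [hta b pb, hta a pa]
    apply Sinv_lt (hne (b + 2) (by omega) (by omega)) (hne (a + 2) (by omega) (by omega))
    exact Qp_elim hQ (a + 2) (b + 2) (by omega) (by omega) (by omega) (by omega)
  · apply Equiv.ext
    intro i
    apply Fin.ext
    rcases show (i : ℕ) = 0 ∨ (i : ℕ) = 1 ∨ 2 ≤ (i : ℕ) from by omega with hi | hi | hi
    · rw [bp_val0 hi]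
      have he : i = (⟨0, p0⟩ : Fin (2 * n + 2)) := Fin.ext (by simp [hi])
      rw [he, h0]
    · rw [bp_val1 hi]
      have he : i = (⟨1, p1⟩ : Fin (2 * n + 2)) := Fin.ext (by simp [hi])
      rw [he]
    · have hi2 := i.isLt
      have he : i = (⟨(i : ℕ) - 2 + 2, by omega⟩ : Fin (2 * n + 2)) := Fin.ext (by simp; omega)
      rw [bp_val2 (⟨(i : ℕ) - 2, by omega⟩ : Fin (2 * n)) (by simp; omega)]
      rw [hta ((i : ℕ) - 2) (by omega)]
      rw [Sf_Sinv (hne ((i : ℕ) - 2 + 2) (by omega) (by omega))]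
      exact congrArg (fun z => ((σ z : Fin _) : ℕ)) he.symm

lemma Tset_succ (n : ℕ) (hn : 1 ≤ n) :
    (Tset (n + 1)).card = (2 * n) * (Tset n).card := by
  have hb : ((Finset.univ : Finset (Fin (2 * n))) ×ˢ Tset n).card = (Tset (n + 1)).card := by
    apply Finset.card_bij
      (fun (p : Fin (2 * n) × Equiv.Perm (Fin (2 * n))) _ =>
        (buildPerm n p.1 p.2 : Equiv.Perm (Fin (2 * (n + 1)))))
    · intro p hp
      have hp2 := (Finset.mem_product.mp hp).2
      exact mem_Tset.mpr (buildPerm_mem hn p.1 hp2)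
    · intro p hp q hq h
      have h1 : ∀ i, buildPerm n p.1 p.2 i = buildPerm n q.1 q.2 i := fun i => by
        exact congrFun (congrArg (fun (e : Equiv.Perm (Fin (2 * n + 2))) => (e : Fin (2 * n + 2) → Fin (2 * n + 2))) h) i
      have hv : p.1 = q.1 := by
        have h2 := congrArg Fin.val (h1 ⟨1, by omega⟩)
        rw [bp_val1 rfl, bp_val1 rfl] at h2
        exact Fin.ext h2
      have ht : p.2 = q.2 := by
        apply Equiv.ext; intro x; apply Fin.ext
        have h2 := congrArg Fin.val (h1 ⟨(x : ℕ) + 2, by have := x.isLt; omega⟩)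
        rw [bp_val2 x rfl, bp_val2 x rfl] at h2
        rw [hv] at h2
        exact Sf_inj h2
      exact Prod.ext hv ht
    · intro σ hσ
      obtain ⟨hdu, hQ⟩ := mem_Tset.mp hσ
      obtain ⟨v, τ, hτ, hbe⟩ := exists_pre hn hdu hQ
      exact ⟨(v, τ), Finset.mem_product.mpr ⟨Finset.mem_univ _, mem_Tset.mpr hτ⟩, hbe⟩
  rw [← hb, Finset.card_product, Finset.card_univ, Fintype.card_fin]

lemma Tset_one : (Tset 1).card = 1 := by
  rw [Finset.card_eq_one]
  refine ⟨Fin.revPerm, ?_⟩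
  have q0 : (0 : ℕ) < 2 * 1 := by omega
  have q1 : (1 : ℕ) < 2 * 1 := by omega
  ext σ
  rw [mem_Tset, Finset.mem_singleton]
  constructor
  · rintro ⟨hdu, -⟩
    have h01 := (isDownUp_elim hdu 0 1 q0 q1 rfl).1 rfl
    have ha := (σ ⟨0, q0⟩).isLt
    have hb := (σ ⟨1, q1⟩).isLt
    apply Equiv.ext; intro i
    apply Fin.ext
    have hrev : ∀ j : Fin (2 * 1), ((Fin.revPerm j : Fin (2 * 1)) : ℕ) = 2 * 1 - 1 - (j : ℕ) := by
      intro j; simp [Fin.val_rev]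
    rw [hrev]
    rcases show (i : ℕ) = 0 ∨ (i : ℕ) = 1 from by have := i.isLt; omega with hi | hi
    · have he : i = ⟨0, q0⟩ := Fin.ext (by simp [hi])
      rw [he]; omega
    · have he : i = ⟨1, q1⟩ := Fin.ext (by simp [hi])
      rw [he]; omega
  · rintro rfl
    constructor
    · apply isDownUp_intro
      intro a b pa pb hba
      subst hba
      constructor <;> intro hp <;>
        simp only [Fin.revPerm_apply, Fin.val_rev] <;> omega
    · apply Qp_intro
      intro a b pa pb hab ha
      simp only [Fin.revPerm_apply, Fin.val_rev]
      omega

lemma Tset_card {n : ℕ} (hn : 1 ≤ n) :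
    (Tset n).card = Nat.doubleFactorial (2 * n - 2) := by
  induction n, hn using Nat.le_induction with
  | base => simpa using Tset_one
  | succ n hn ih =>
    rw [Tset_succ n hn, ih]
    have h2 : 2 * (n + 1) - 2 = (2 * n - 2) + 2 := by omega
    rw [h2, Nat.doubleFactorial_add_two]
    have h3 : 2 * n - 2 + 2 = 2 * n := by omega
    rw [h3]

lemma Ccount_eq_Tset (n : ℕ) (hn : 1 ≤ n) : CcountEq n (n - 1) = (Tset n).card := by
  unfold CcountEq
  apply Finset.card_bij (fun σ _ => σ)
  · intro σ hσ
    rw [Finset.mem_filter] at hσ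
    have hd : IsDownUp σ := by simpa [DUset] using hσ.1
    exact mem_Tset.mpr ⟨hd, (mmp_eq_iff hd).mp hσ.2⟩
  · intro a _ b _ h; exact h
  · intro σ hσ
    obtain ⟨hd, hq⟩ := mem_Tset.mp hσ
    refine ⟨σ, ?_, rfl⟩
    rw [Finset.mem_filter]
    exact ⟨by simp [DUset, hd], (mmp_eq_iff hd).mpr hq⟩

end Stmt10Aux

theorem stmt10 (n : ℕ) (hn : 1 ≤ n) :
    (∀ σ : Equiv.Perm (Fin (2 * n)), IsDownUp σ → n - 1 ≤ mmp1000 σ) ∧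
    CcountEq n (n - 1) = Nat.doubleFactorial (2 * n - 2) := by
  constructor
  · intro σ hσ
    exact mmp_lower hσ
  · rw [Ccount_eq_Tset n hn, Tset_card hn]
end

section
/- For all n ≥ 1, every down-up permutation σ of length 2n+1 satisfies mmp^{(1,0,0,0)}(σ) ≥ n, and the number of down-up permutations of length 2n+1 with mmp^{(1,0,0,0)}(σ) = n is exactly (2n-1)!!. -/
/-!
A down-up permutation has an ascent at every odd position, so its `n` odd positions are never
right-to-left maxima and `mmp^{(1,0,0,0)} ≥ n`. Equality means that every even position is a
right-to-left maximum, i.e. `σ(2k+1) < σ(2k+2) < σ(2k)` for all `k`. Such a permutation of length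
`2n+3` starts with its maximum, followed by any value except the two largest, and the rest,
standardized, is again such a permutation of length `2n+1`; so their number `c n` satisfies
`c (n+1) = (2n+1) c n`.
-/

open Finset

open Equiv

/-- Prepends the value `v` to `τ`, shifting the values of `τ` that are `≥ v` up by one. -/
def permCons {m : ℕ} (v : Fin (m + 1)) (τ : Perm (Fin m)) : Perm (Fin (m + 1)) :=
  (finSuccEquiv m).trans ((Equiv.optionCongr τ).trans (finSuccEquiv' v).symm)

section permCons

variable {m : ℕ} (v : Fin (m + 1)) (τ : Perm (Fin m))

@[simp] lemma permCons_zero : permCons v τ 0 = v := by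
  simp [permCons]

@[simp] lemma permCons_succ (i : Fin m) : permCons v τ i.succ = v.succAbove (τ i) := by
  simp [permCons]

end permCons

lemma permCons_injective {m : ℕ} :
    Function.Injective (fun p : Fin (m + 1) × Perm (Fin m) => permCons p.1 p.2) := by
  rintro ⟨v, τ⟩ ⟨v', τ'⟩ h
  have hv : v = v' := by simpa using DFunLike.congr_fun h 0
  subst hv
  refine Prod.ext rfl (Equiv.ext fun i => Fin.succAbove_right_injective (p := v) ?_)
  simpa using DFunLike.congr_fun h i.succ

noncomputable def permConsEquiv (m : ℕ) : Fin (m + 1) × Perm (Fin m) ≃ Perm (Fin (m + 1)) :=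
  Equiv.ofBijective _ ((Fintype.bijective_iff_injective_and_card _).2
    ⟨permCons_injective, by simp [Fintype.card_perm, Nat.factorial_succ]⟩)

@[simp] lemma permConsEquiv_apply {m : ℕ} (p : Fin (m + 1) × Perm (Fin m)) :
    permConsEquiv m p = permCons p.1 p.2 :=
  rfl

def notRightMaxima {m : ℕ} (σ : Perm (Fin m)) : Finset (Fin m) :=
  univ.filter fun i => ∃ j, i < j ∧ σ i < σ j

lemma mmp1000_eq_card_notRightMaxima {m : ℕ} (σ : Perm (Fin m)) :
    mmp1000 σ = #(notRightMaxima σ) :=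
  rfl

def oddPositions (n : ℕ) : Finset (Fin (2 * n + 1)) :=
  univ.filter fun i => (i : ℕ) % 2 = 1

lemma card_oddPositions (n : ℕ) : #(oddPositions n) = n := by
  conv_rhs => rw [← Fintype.card_fin n, ← Finset.card_univ]
  refine Finset.card_bij' (fun i hi => ⟨i / 2, by simp [oddPositions] at hi; omega⟩)
    (fun k _ => ⟨2 * k + 1, by omega⟩) ?_ ?_ ?_ ?_ <;> simp [oddPositions, Fin.ext_iff] <;> omega

lemma IsDownUp.oddPositions_subset {n : ℕ} {σ : Perm (Fin (2 * n + 1))} (h : IsDownUp σ) :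
    oddPositions n ⊆ notRightMaxima σ := by
  intro i hi
  simp only [oddPositions, mem_filter, mem_univ, true_and] at hi
  have hlt : (i : ℕ) + 1 < 2 * n + 1 := by omega
  have := h i hlt
  rw [if_neg (by omega)] at this
  simp only [notRightMaxima, mem_filter, mem_univ, true_and]
  exact ⟨⟨i + 1, hlt⟩, Fin.lt_def.2 (Nat.lt_succ_self _), this⟩

lemma IsDownUp.le_mmp1000 {n : ℕ} {σ : Perm (Fin (2 * n + 1))} (h : IsDownUp σ) :
    n ≤ mmp1000 σ :=
  calc n = #(oddPositions n) := (card_oddPositions n).symm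
    _ ≤ mmp1000 σ := card_le_card h.oddPositions_subset

/-- The down-up permutations all of whose even positions are right-to-left maxima. -/
def IsMinDownUp (n : ℕ) (σ : Perm (Fin (2 * n + 1))) : Prop :=
  ∀ k (hk : k < n), σ ⟨2 * k + 1, by omega⟩ < σ ⟨2 * k + 2, by omega⟩ ∧
    σ ⟨2 * k + 2, by omega⟩ < σ ⟨2 * k, by omega⟩

instance (n : ℕ) : DecidablePred (IsMinDownUp n) :=
  fun _ => by unfold IsMinDownUp; infer_instance

namespace IsMinDownUp

variable {n : ℕ} {σ : Perm (Fin (2 * n + 1))}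

lemma apply_even_le (h : IsMinDownUp n σ) {k k' : ℕ} (hkk' : k ≤ k') (hk' : k' ≤ n) :
    σ ⟨2 * k', by omega⟩ ≤ σ ⟨2 * k, by omega⟩ := by
  induction k', hkk' using Nat.le_induction with
  | base => exact le_rfl
  | succ k' _ ih => exact (h k' (by omega)).2.le.trans (ih (by omega))

lemma apply_lt_of_even_lt (h : IsMinDownUp n σ) {i j : Fin (2 * n + 1)} (hi : (i : ℕ) % 2 = 0)
    (hij : i < j) : σ j < σ i := by
  obtain ⟨k, hk⟩ : ∃ k, (i : ℕ) = 2 * k := ⟨i / 2, by omega⟩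
  obtain ⟨k', hkk', hk'n, hj⟩ :
      ∃ k', k ≤ k' ∧ k' < n ∧ ((j : ℕ) = 2 * k' + 1 ∨ (j : ℕ) = 2 * k' + 2) :=
    ⟨(j - 1) / 2, by rw [Fin.lt_def] at hij; omega⟩
  have hj' : σ j < σ ⟨2 * k', by omega⟩ := by
    obtain ⟨h1, h2⟩ := h k' hk'n
    rcases hj with hj | hj
    · rw [show j = ⟨2 * k' + 1, by omega⟩ from Fin.ext hj]
      exact h1.trans h2
    · rwa [show j = ⟨2 * k' + 2, by omega⟩ from Fin.ext hj]
  rw [show i = ⟨2 * k, by omega⟩ from Fin.ext hk]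
  exact hj'.trans_le (h.apply_even_le hkk' hk'n.le)


lemma apply_zero (h : IsMinDownUp n σ) : σ 0 = Fin.last (2 * n) := by
  refine Fin.last_le_iff.1 ?_
  obtain ⟨j, hj⟩ := σ.surjective (Fin.last (2 * n))
  rw [← hj]
  rcases (Fin.zero_le j).eq_or_lt with rfl | hj0
  · exact le_rfl
  · exact (h.apply_lt_of_even_lt (by simp) hj0).le

lemma isDownUp (h : IsMinDownUp n σ) : IsDownUp σ := by
  rintro ⟨i, hi⟩ hi1
  simp only at hi1
  obtain ⟨k, rfl | rfl⟩ : ∃ k, i = 2 * k ∨ i = 2 * k + 1 := ⟨i / 2, by omega⟩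
  · simpa using (h k (by omega)).1.trans (h k (by omega)).2
  · simpa [Nat.add_mod] using (h k (by omega)).1

lemma notRightMaxima_eq (h : IsMinDownUp n σ) : notRightMaxima σ = oddPositions n := by
  refine subset_antisymm (fun i hi => ?_) h.isDownUp.oddPositions_subset
  simp only [notRightMaxima, oddPositions, mem_filter, mem_univ, true_and] at hi ⊢
  obtain ⟨j, hij, hσ⟩ := hi
  by_contra hodd
  exact (h.apply_lt_of_even_lt (by omega) hij).not_gt hσ

end IsMinDownUp

lemma isDownUp_and_mmp1000_eq_iff {n : ℕ} (σ : Perm (Fin (2 * n + 1))) :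
    IsDownUp σ ∧ mmp1000 σ = n ↔ IsMinDownUp n σ := by
  refine ⟨fun ⟨hσ, hmmp⟩ k hk => ⟨?_, ?_⟩, fun h => ⟨h.isDownUp, ?_⟩⟩
  · simpa [Nat.add_mod] using hσ ⟨2 * k + 1, by omega⟩ (show 2 * k + 1 + 1 < 2 * n + 1 by omega)
  · have hodd : notRightMaxima σ = oddPositions n :=
      (eq_of_subset_of_card_le hσ.oddPositions_subset
        (by rw [card_oddPositions]; exact hmmp.le)).symm
    have hk : (⟨2 * k, by omega⟩ : Fin (2 * n + 1)) ∉ notRightMaxima σ := by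
      simp [hodd, oddPositions]
    simp only [notRightMaxima, mem_filter, mem_univ, true_and, not_exists, not_and, not_lt] at hk
    refine (hk ⟨2 * k + 2, by omega⟩ (by simp [Fin.lt_def])).lt_of_ne ?_
    simp [Fin.ext_iff]
  · rw [mmp1000_eq_card_notRightMaxima, h.notRightMaxima_eq, card_oddPositions]

lemma permCons_permCons_lt_iff {m : ℕ} (a : Fin (m + 2)) (b : Fin (m + 1)) (τ : Perm (Fin m))
    {i j : Fin m} {i' j' : Fin (m + 2)} (hi : (i' : ℕ) = i + 2) (hj : (j' : ℕ) = j + 2) :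
    permCons a (permCons b τ) i' < permCons a (permCons b τ) j' ↔ τ i < τ j := by
  obtain rfl : i' = i.succ.succ := Fin.ext hi
  obtain rfl : j' = j.succ.succ := Fin.ext hj
  simp [Fin.succAbove_lt_succAbove_iff]

lemma isMinDownUp_permCons_permCons_iff' {n : ℕ} (a : Fin (2 * n + 3)) (b : Fin (2 * n + 2))
    (τ : Perm (Fin (2 * n + 1))) :
    IsMinDownUp (n + 1) (permCons a (permCons b τ)) ↔
      (a.succAbove b < a.succAbove (b.succAbove (τ 0)) ∧ a.succAbove (b.succAbove (τ 0)) < a) ∧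
        IsMinDownUp n τ := by
  have h0 : permCons a (permCons b τ) ⟨2 * 0, by omega⟩ = a := permCons_zero a _
  have h1 : permCons a (permCons b τ) ⟨2 * 0 + 1, by omega⟩ = a.succAbove b :=
    (permCons_succ a _ 0).trans (congrArg a.succAbove (permCons_zero b τ))
  have h2 : permCons a (permCons b τ) ⟨2 * 0 + 2, by omega⟩ = a.succAbove (b.succAbove (τ 0)) :=
    (permCons_succ a _ (Fin.succ 0)).trans (congrArg a.succAbove (permCons_succ b τ 0))
  unfold IsMinDownUp
  rw [Nat.forall_lt_succ_left', h0, h1, h2]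
  refine and_congr_right' (forall₂_congr fun k hk => and_congr ?_ ?_) <;>
    exact permCons_permCons_lt_iff a b τ rfl rfl

lemma isMinDownUp_permCons_permCons_iff {n : ℕ} (a : Fin (2 * n + 3)) (b : Fin (2 * n + 2))
    (τ : Perm (Fin (2 * n + 1))) :
    IsMinDownUp (n + 1) (permCons a (permCons b τ)) ↔
      a = Fin.last _ ∧ b ≠ Fin.last _ ∧ IsMinDownUp n τ := by
  have ascent_iff (hτ : IsMinDownUp n τ) :
      (Fin.last _).succAbove b < (Fin.last _).succAbove (b.succAbove (τ 0)) ↔ b ≠ Fin.last _ := by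
    simp only [Fin.succAbove_last, Fin.castSucc_lt_castSucc_iff, Fin.lt_succAbove_iff_le_castSucc,
      hτ.apply_zero, Fin.le_def, ne_eq, Fin.ext_iff, Fin.val_castSucc, Fin.val_last]
    omega
  refine ⟨fun h => ?_, fun ⟨ha, hb, hτ⟩ => ?_⟩
  · have ha : a = Fin.last _ := (permCons_zero a _).symm.trans h.apply_zero
    subst ha
    obtain ⟨⟨hasc, -⟩, hτ⟩ := (isMinDownUp_permCons_permCons_iff' _ _ _).1 h
    exact ⟨rfl, (ascent_iff hτ).1 hasc, hτ⟩
  · subst ha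
    exact (isMinDownUp_permCons_permCons_iff' _ _ _).2 ⟨⟨(ascent_iff hτ).2 hb,
      (Fin.succAbove_last_apply _).trans_lt (Fin.castSucc_lt_last _)⟩, hτ⟩

lemma card_isMinDownUp_succ (n : ℕ) :
    #(univ.filter (IsMinDownUp (n + 1))) = (2 * n + 1) * #(univ.filter (IsMinDownUp n)) := by
  let e := (Equiv.prodCongr (Equiv.refl _) (permConsEquiv (2 * n + 1))).trans
    (permConsEquiv (2 * n + 2))
  calc #(univ.filter (IsMinDownUp (n + 1)))
      = #({Fin.last _} ×ˢ (univ.erase (Fin.last _) ×ˢ univ.filter (IsMinDownUp n))) :=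
        (card_equiv e fun ⟨a, b, τ⟩ => by
          simp [e, mem_product, isMinDownUp_permCons_permCons_iff, and_comm,
            @eq_comm _ (Fin.last _)]).symm
    _ = (2 * n + 1) * #(univ.filter (IsMinDownUp n)) := by
        simp [card_product, card_erase_of_mem]

lemma card_isMinDownUp (n : ℕ) :
    #(univ.filter (IsMinDownUp n)) = Nat.doubleFactorial (2 * n - 1) := by
  induction n with
  | zero =>
    rw [filter_true_of_mem fun σ _ k hk => absurd hk k.not_lt_zero]
    rfl
  | succ n ih =>
    rw [card_isMinDownUp_succ, ih]
    cases n with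
    | zero => rfl
    | succ n =>
      rw [show 2 * (n + 1 + 1) - 1 = 2 * n + 1 + 2 by omega, Nat.doubleFactorial_add_two]
      rfl

lemma dcountEq_self_eq_card_isMinDownUp (n : ℕ) :
    DcountEq n n = #(univ.filter (IsMinDownUp n)) := by
  unfold DcountEq DUset
  rw [filter_filter]
  congr 1
  ext σ
  simp [isDownUp_and_mmp1000_eq_iff]

theorem stmt11_general (n : ℕ) :
    (∀ σ : Equiv.Perm (Fin (2 * n + 1)), IsDownUp σ → n ≤ mmp1000 σ) ∧
    DcountEq n n = Nat.doubleFactorial (2 * n - 1) :=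
  ⟨fun _ hσ => hσ.le_mmp1000, (dcountEq_self_eq_card_isMinDownUp n).trans (card_isMinDownUp n)⟩

theorem stmt11 (n : ℕ) (hn : 1 ≤ n) :
    (∀ σ : Equiv.Perm (Fin (2 * n + 1)), IsDownUp σ → n ≤ mmp1000 σ) ∧
    DcountEq n n = Nat.doubleFactorial (2 * n - 1) :=
  stmt11_general n
end

section
/- For all n ≥ 1, the maximum value of mmp^{(1,0,0,0)} over up-down permutations of length 2n is 2n-1, and the number of up-down permutations of length 2n attaining this maximum equals the number of up-down permutations of length 2n-1. -/
open Finset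

/-!
Neither the last position nor the position of the largest value is counted by `mmp1000`, and
when the largest value sits in the last position every other position is counted. Hence
`mmp1000 σ ≤ m` on `Fin (m + 1)`, with equality exactly when `σ` fixes the last position.
An up-down permutation of length `2n` ending in its maximum is an up-down permutation of
length `2n - 1` followed by `2n`; the appended step is an ascent because `2n - 1` is odd.
The permutation `0 2 1 4 3 ⋯` shows that such permutations exist.
-/

open Equiv

section mmp1000

variable {m : ℕ}

lemma ne_last_and_apply_ne_last_of_exists {σ : Perm (Fin (m + 1))} {i : Fin (m + 1)}
    (h : ∃ j, i < j ∧ σ i < σ j) : i ≠ Fin.last m ∧ σ i ≠ Fin.last m := by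
  obtain ⟨j, hij, hσ⟩ := h
  exact ⟨(hij.trans_le (Fin.le_last j)).ne, (hσ.trans_le (Fin.le_last _)).ne⟩

lemma mmp1000_le (σ : Perm (Fin (m + 1))) : mmp1000 σ ≤ m := by
  have hsub : univ.filter (fun i => ∃ j, i < j ∧ σ i < σ j) ⊆ univ.erase (Fin.last m) :=
    fun i hi => mem_erase.2 ⟨(ne_last_and_apply_ne_last_of_exists (mem_filter.1 hi).2).1,
      mem_univ i⟩
  simpa [mmp1000] using card_le_card hsub

lemma mmp1000_lt_of_apply_last_ne {σ : Perm (Fin (m + 1))}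
    (hσ : σ (Fin.last m) ≠ Fin.last m) : mmp1000 σ < m := by
  have hsymm : σ.symm (Fin.last m) ≠ Fin.last m := fun h => hσ (σ.symm_apply_eq.1 h).symm
  have hm : 0 < m := Nat.pos_of_ne_zero fun h0 => hsymm <| Fin.ext <| by
    have := (σ.symm (Fin.last m)).isLt
    simp only [Fin.val_last]
    omega
  have hsub : univ.filter (fun i => ∃ j, i < j ∧ σ i < σ j) ⊆
      (univ.erase (Fin.last m)).erase (σ.symm (Fin.last m)) := by
    intro i hi
    obtain ⟨hi, hσi⟩ := ne_last_and_apply_ne_last_of_exists (mem_filter.1 hi).2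
    exact mem_erase.2 ⟨fun h => hσi (by simp [h]), mem_erase.2 ⟨hi, mem_univ i⟩⟩
  have hcard := card_le_card hsub
  rw [card_erase_of_mem (by simpa using hsymm), card_erase_of_mem (mem_univ _), card_univ,
    Fintype.card_fin] at hcard
  rw [mmp1000]
  omega

lemma mmp1000_eq_of_apply_last {σ : Perm (Fin (m + 1))} (hσ : σ (Fin.last m) = Fin.last m) :
    mmp1000 σ = m := by
  have : univ.filter (fun i => ∃ j, i < j ∧ σ i < σ j) = univ.erase (Fin.last m) := by
    ext i
    simp only [mem_filter, mem_erase, mem_univ, true_and, and_true]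
    refine ⟨fun h => (ne_last_and_apply_ne_last_of_exists h).1, fun hi => ?_⟩
    refine ⟨Fin.last m, Fin.lt_last_iff_ne_last.2 hi, ?_⟩
    rw [hσ, Fin.lt_last_iff_ne_last, ← hσ]
    exact σ.injective.ne hi
  simp [mmp1000, this]

lemma mmp1000_eq_iff (σ : Perm (Fin (m + 1))) :
    mmp1000 σ = m ↔ σ (Fin.last m) = Fin.last m :=
  ⟨fun h => by_contra fun hσ => (mmp1000_lt_of_apply_last_ne hσ).ne h,
    mmp1000_eq_of_apply_last⟩

end mmp1000

section extendLast

variable {m : ℕ}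

def extendLast (τ : Perm (Fin m)) : Perm (Fin (m + 1)) :=
  finSuccEquivLast.permCongr.symm τ.optionCongr

@[simp]
lemma extendLast_castSucc (τ : Perm (Fin m)) (i : Fin m) :
    extendLast τ i.castSucc = (τ i).castSucc := by
  simp [extendLast]

lemma extendLast_mk (τ : Perm (Fin m)) {i : ℕ} (hi : i < m) :
    extendLast τ ⟨i, hi.trans (Nat.lt_succ_self m)⟩ = (τ ⟨i, hi⟩).castSucc :=
  extendLast_castSucc τ ⟨i, hi⟩

@[simp]
lemma extendLast_last (τ : Perm (Fin m)) : extendLast τ (Fin.last m) = Fin.last m := by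
  simp [extendLast]

lemma extendLast_injective : Function.Injective (extendLast (m := m)) :=
  finSuccEquivLast.permCongr.symm.injective.comp optionCongr_injective

lemma exists_extendLast_eq {σ : Perm (Fin (m + 1))} (hσ : σ (Fin.last m) = Fin.last m) :
    ∃ τ, extendLast τ = σ := by
  set π := finSuccEquivLast.permCongr σ
  have hπ : π none = none := by simp [π, hσ]
  refine ⟨removeNone π, ?_⟩
  rw [extendLast, map_equiv_removeNone, hπ, swap_self, ← Perm.one_def, one_mul]
  exact finSuccEquivLast.permCongr.symm_apply_apply σ

lemma isUpDown_extendLast_iff (hm : Odd m) (τ : Perm (Fin m)) :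
    IsUpDown (extendLast τ) ↔ IsUpDown τ := by
  obtain ⟨k, rfl⟩ := hm
  constructor
  · intro h i hi
    simpa [extendLast_mk τ hi] using h i.castSucc (by simp; omega)
  · intro h i hi
    rcases Nat.lt_succ_iff_lt_or_eq.1 hi with hi' | hi'
    · simpa [extendLast_mk τ (Nat.lt_of_succ_lt hi'), extendLast_mk τ hi'] using
        h ⟨i, by omega⟩ hi'
    · have hlast : (⟨i + 1, hi⟩ : Fin (2 * k + 1 + 1)) = Fin.last _ := Fin.ext hi'
      have heven : (i : ℕ) % 2 = 0 := by omega
      simp only [hlast, heven, if_true, extendLast_last,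
        extendLast_mk τ (show (i : ℕ) < 2 * k + 1 by omega)]
      exact Fin.castSucc_lt_last _

end extendLast

/-- `0 2 1 4 3 ⋯ 2m (2m-1)`; `0` is fixed because `0 - 1 = 0` in `ℕ`. -/
def swapPairs (m : ℕ) : Perm (Fin (2 * m + 1)) :=
  Function.Involutive.toPerm
    (fun i => ⟨if (i : ℕ) % 2 = 1 then (i : ℕ) + 1 else (i : ℕ) - 1, by
      have := i.isLt
      split_ifs <;> omega⟩)
    (fun i => Fin.ext (by dsimp only; split_ifs <;> omega))

lemma swapPairs_val (m : ℕ) (i : Fin (2 * m + 1)) :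
    (swapPairs m i : ℕ) = if (i : ℕ) % 2 = 1 then (i : ℕ) + 1 else (i : ℕ) - 1 :=
  rfl

lemma isUpDown_swapPairs (m : ℕ) : IsUpDown (swapPairs m) := by
  intro i hi
  simp only [Fin.lt_def, swapPairs_val]
  split_ifs <;> omega

lemma UDset_odd_nonempty (m : ℕ) : (UDset (2 * m + 1)).Nonempty :=
  ⟨swapPairs m, by simpa [UDset] using isUpDown_swapPairs m⟩

lemma card_filter_UDset_mmp1000_eq (m : ℕ) :
    ((UDset (2 * m + 2)).filter (fun σ => mmp1000 σ = 2 * m + 1)).card =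
      (UDset (2 * m + 1)).card := by
  have hodd : Odd (2 * m + 1) := odd_two_mul_add_one m
  refine (card_bij (fun τ _ => extendLast τ) ?_ (fun _ _ _ _ h => extendLast_injective h) ?_).symm
  · intro τ hτ
    simp only [UDset, mem_filter, mem_univ, true_and] at hτ ⊢
    exact ⟨(isUpDown_extendLast_iff hodd τ).2 hτ, (mmp1000_eq_iff _).2 (extendLast_last τ)⟩
  · intro σ hσ
    simp only [UDset, mem_filter, mem_univ, true_and] at hσ ⊢
    obtain ⟨τ, rfl⟩ := exists_extendLast_eq ((mmp1000_eq_iff σ).1 hσ.2)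
    exact ⟨τ, (isUpDown_extendLast_iff hodd τ).1 hσ.1, rfl⟩

theorem stmt12 (n : ℕ) (hn : 1 ≤ n) :
    (∀ σ ∈ UDset (2 * n), mmp1000 σ ≤ 2 * n - 1) ∧
    (∃ σ ∈ UDset (2 * n), mmp1000 σ = 2 * n - 1) ∧
    AcountEq n (2 * n - 1) = udCount (2 * n - 1) := by
  obtain ⟨m, rfl⟩ : ∃ m, n = m + 1 := ⟨n - 1, by omega⟩
  have hcount : AcountEq (m + 1) (2 * m + 1) = udCount (2 * m + 1) :=
    card_filter_UDset_mmp1000_eq m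
  have hpos : 0 < AcountEq (m + 1) (2 * m + 1) := hcount ▸ (UDset_odd_nonempty m).card_pos
  obtain ⟨σ, hσ⟩ := card_pos.1 hpos
  exact ⟨fun σ _ => mmp1000_le σ, ⟨σ, mem_filter.1 hσ⟩, hcount⟩
end

section
/- For all n ≥ 1, the maximum value of mmp^{(1,0,0,0)} over up-down permutations of length 2n+1 is 2n-1, and the number of up-down permutations of length 2n+1 attaining this maximum equals 2n times the number of up-down permutations of length 2n-1. -/
open Finset

/-!
mmp^{(1,0,0,0)}(σ) counts the positions that are not right-to-left maxima. An up-down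
permutation of odd length ends with a descent, so its last position and the position of its
maximum are two distinct right-to-left maxima, whence mmp^{(1,0,0,0)}(σ) ≤ 2n - 1. If the maximum
is not in the second-to-last position, the largest entry to its right is a third right-to-left
maximum; so equality holds exactly when the maximum sits in the second-to-last position. Such a
permutation is determined by its last value (any of the 2n non-maximal values) and the
standardization of its first 2n - 1 entries, which is an arbitrary up-down permutation. By
induction from length 1, this count is positive, so the bound is attained.
-/

open Equiv

namespace Equiv.Perm

variable {m : ℕ}

/-- The standardization of the first `m` entries of `σ`. -/
def dropLast (σ : Perm (Fin (m + 1))) : Perm (Fin m) :=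
  (finSuccAboveEquiv (Fin.last m)).trans <|
    (σ.subtypeEquiv (p := (· ≠ Fin.last m)) (q := (· ≠ σ (Fin.last m)))
      fun _ => σ.injective.ne_iff.symm).trans
      (finSuccAboveEquiv (σ (Fin.last m))).symm

theorem succAbove_dropLast_apply (σ : Perm (Fin (m + 1))) (i : Fin m) :
    (σ (Fin.last m)).succAbove (σ.dropLast i) = σ i.castSucc := by
  have h := congrArg Subtype.val <| (finSuccAboveEquiv (σ (Fin.last m))).apply_symm_apply <|
    σ.subtypeEquiv (p := (· ≠ Fin.last m)) (q := (· ≠ σ (Fin.last m)))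
      (fun _ => σ.injective.ne_iff.symm) (finSuccAboveEquiv (Fin.last m) i)
  rw [finSuccAboveEquiv_apply] at h
  simpa [dropLast, finSuccAboveEquiv_apply] using h

theorem dropLast_lt_dropLast_iff (σ : Perm (Fin (m + 1))) {i j : Fin m} :
    σ.dropLast i < σ.dropLast j ↔ σ i.castSucc < σ j.castSucc := by
  rw [← succAbove_dropLast_apply, ← succAbove_dropLast_apply, Fin.succAbove_lt_succAbove_iff]

/-- The order-preserving analogue of `Equiv.Perm.decomposeFin`: `σ` corresponds to its last
value `v` and the standardization `τ` of its remaining entries, and `σ i = v.succAbove (τ i)`. -/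
def decomposeLast : Perm (Fin (m + 1)) ≃ Fin (m + 1) × Perm (Fin m) where
  toFun σ := (σ (Fin.last m), σ.dropLast)
  invFun p := (finSuccEquiv' (Fin.last m)).trans <|
    (Equiv.optionCongr p.2).trans (finSuccEquiv' p.1).symm
  left_inv σ := by
    ext1 x
    induction x using Fin.lastCases with
    | last => simp
    | cast i => simp [finSuccEquiv'_last_apply_castSucc, succAbove_dropLast_apply]
  right_inv p := by
    have hlast : ((finSuccEquiv' (Fin.last m)).trans <|
        (Equiv.optionCongr p.2).trans (finSuccEquiv' p.1).symm) (Fin.last m) = p.1 := by simp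
    refine Prod.ext hlast (Equiv.ext fun i => Fin.succAbove_right_injective (p := p.1) ?_)
    conv_lhs => rw [← hlast, succAbove_dropLast_apply]
    simp [finSuccEquiv'_last_apply_castSucc]

@[simp]
theorem decomposeLast_apply (σ : Perm (Fin (m + 1))) :
    decomposeLast σ = (σ (Fin.last m), σ.dropLast) := rfl

@[simp]
theorem decomposeLast_symm_apply_last (v : Fin (m + 1)) (τ : Perm (Fin m)) :
    decomposeLast.symm (v, τ) (Fin.last m) = v := by
  simp [decomposeLast]

@[simp]
theorem decomposeLast_symm_apply_castSucc (v : Fin (m + 1)) (τ : Perm (Fin m)) (i : Fin m) :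
    decomposeLast.symm (v, τ) i.castSucc = v.succAbove (τ i) := by
  simp [decomposeLast, finSuccEquiv'_last_apply_castSucc]

theorem dropLast_decomposeLast_symm (v : Fin (m + 1)) (τ : Perm (Fin m)) :
    (decomposeLast.symm (v, τ)).dropLast = τ :=
  congrArg Prod.snd (decomposeLast.apply_symm_apply (v, τ))

theorem dropLast_dropLast_lt_iff (σ : Perm (Fin (m + 2))) {i j : Fin m} :
    σ.dropLast.dropLast i < σ.dropLast.dropLast j ↔
      σ (Fin.castLE (by omega) i) < σ (Fin.castLE (by omega) j) := by
  rw [dropLast_lt_dropLast_iff, dropLast_lt_dropLast_iff]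
  rfl

theorem dropLast_apply_last {σ : Perm (Fin (m + 2))}
    (h : σ (Fin.last m).castSucc = Fin.last (m + 1)) : σ.dropLast (Fin.last m) = Fin.last m := by
  have hne : σ (Fin.last (m + 1)) ≠ Fin.last (m + 1) :=
    fun he => (Fin.castSucc_lt_last (Fin.last m)).ne' (σ.injective (he.trans h.symm))
  apply Fin.succAbove_right_injective (p := σ (Fin.last (m + 1)))
  rw [succAbove_dropLast_apply, h, Fin.succAbove_ne_last_last hne]

def rlMaxima {N : ℕ} (σ : Perm (Fin N)) : Finset (Fin N) :=
  univ.filter fun i => ∀ j, i < j → σ j ≤ σ i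

theorem mmp1000_add_card_rlMaxima {N : ℕ} (σ : Perm (Fin N)) :
    mmp1000 σ + #σ.rlMaxima = N := by
  rw [mmp1000, rlMaxima]
  conv_rhs => rw [← card_fin N]
  convert card_filter_add_card_filter_not
    (s := univ) (fun i : Fin N => ∃ j, i < j ∧ σ i < σ j) using 3
  simp

section rlMaxima

variable (σ : Perm (Fin (m + 1)))

theorem last_mem_rlMaxima : Fin.last m ∈ σ.rlMaxima := by
  simp [rlMaxima, not_lt_of_ge (Fin.le_last _)]

theorem symm_last_mem_rlMaxima : σ.symm (Fin.last m) ∈ σ.rlMaxima := by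
  simp [rlMaxima, Fin.le_last]

theorem two_le_card_rlMaxima (h : σ (Fin.last m) ≠ Fin.last m) : 2 ≤ #σ.rlMaxima := by
  have hne : σ.symm (Fin.last m) ≠ Fin.last m := fun he =>
    h ((congrArg σ he).symm.trans (σ.apply_symm_apply _))
  calc 2 = #{σ.symm (Fin.last m), Fin.last m} := (card_pair hne).symm
    _ ≤ #σ.rlMaxima := card_le_card <| by
      simp [insert_subset_iff, last_mem_rlMaxima, symm_last_mem_rlMaxima]

/-- The position of the largest value after the maximum is a third right-to-left maximum. -/
theorem three_le_card_rlMaxima {a : Fin (m + 1)} (ha : σ.symm (Fin.last m) < a)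
    (hlast : σ (Fin.last m) < σ a) : 3 ≤ #σ.rlMaxima := by
  obtain ⟨q, hq, hqmax⟩ :=
    (Ioi (σ.symm (Fin.last m))).exists_max_image σ ⟨a, mem_Ioi.2 ha⟩
  rw [mem_Ioi] at hq
  have hq_mem : q ∈ σ.rlMaxima := by
    simp only [rlMaxima, mem_filter, mem_univ, true_and]
    exact fun j hj => hqmax j (mem_Ioi.2 (hq.trans hj))
  have hq_ne_last : q ≠ Fin.last m := by
    rintro rfl
    exact (hqmax a (mem_Ioi.2 ha)).not_gt hlast
  have hne : σ.symm (Fin.last m) ≠ Fin.last m := (ha.trans_le (Fin.le_last a)).ne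
  calc 3 = #{σ.symm (Fin.last m), q, Fin.last m} :=
        (card_eq_three.2 ⟨_, _, _, hq.ne, hne, hq_ne_last, rfl⟩).symm
    _ ≤ #σ.rlMaxima := card_le_card <| by
      simp [insert_subset_iff, last_mem_rlMaxima, symm_last_mem_rlMaxima, hq_mem]

end rlMaxima

theorem mmp1000_le (σ : Perm (Fin (m + 2))) (h : σ (Fin.last (m + 1)) ≠ Fin.last (m + 1)) :
    mmp1000 σ ≤ m := by
  have := σ.two_le_card_rlMaxima h
  have := σ.mmp1000_add_card_rlMaxima
  omega

theorem mmp1000_eq_iff (σ : Perm (Fin (m + 2)))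
    (hdesc : σ (Fin.last (m + 1)) < σ (Fin.last m).castSucc) :
    mmp1000 σ = m ↔ σ (Fin.last m).castSucc = Fin.last (m + 1) := by
  have hsum := σ.mmp1000_add_card_rlMaxima
  have htwo := σ.two_le_card_rlMaxima (hdesc.trans_le (Fin.le_last _)).ne
  constructor
  · intro h
    by_contra htop
    have hp : σ.symm (Fin.last (m + 1)) < (Fin.last m).castSucc := by
      have h1 : σ.symm (Fin.last (m + 1)) ≠ (Fin.last m).castSucc := fun he =>
        htop ((congrArg σ he).symm.trans (σ.apply_symm_apply _))
      have h2 : σ.symm (Fin.last (m + 1)) ≠ Fin.last (m + 1) := fun he =>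
        (hdesc.trans_le (Fin.le_last _)).ne ((congrArg σ he).symm.trans (σ.apply_symm_apply _))
      simp only [ne_eq, Fin.ext_iff, Fin.val_castSucc, Fin.val_last] at h1 h2
      rw [Fin.lt_def, Fin.val_castSucc, Fin.val_last]
      omega
    have := σ.three_le_card_rlMaxima hp hdesc
    omega
  · intro htop
    have hsub : σ.rlMaxima ⊆ {(Fin.last m).castSucc, Fin.last (m + 1)} := by
      intro i hi
      simp only [rlMaxima, mem_filter, mem_univ, true_and] at hi
      rw [mem_insert, mem_singleton]
      by_cases hlt : i < (Fin.last m).castSucc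
      · left
        apply σ.injective
        rw [htop]
        exact le_antisymm (Fin.le_last _) (htop ▸ hi _ hlt)
      · rw [Fin.lt_def, Fin.val_castSucc, Fin.val_last] at hlt
        simp only [Fin.ext_iff, Fin.val_castSucc, Fin.val_last]
        omega
    have := (card_le_card hsub).trans card_le_two
    omega

end Equiv.Perm

namespace IsUpDown

theorem of_castLE {k N : ℕ} (h : k ≤ N) {σ : Perm (Fin N)} {τ : Perm (Fin k)}
    (hpat : ∀ i j, τ i < τ j ↔ σ (Fin.castLE h i) < σ (Fin.castLE h j))
    (hσ : IsUpDown σ) :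
    IsUpDown τ := by
  intro i hi
  have := hσ (Fin.castLE h i) (by simp; omega)
  simp only [Fin.val_castLE] at this
  have hsucc : (⟨i + 1, by omega⟩ : Fin N) = Fin.castLE h ⟨i + 1, hi⟩ := rfl
  rw [hsucc] at this
  split_ifs at this ⊢ <;> exact (hpat _ _).2 this

theorem apply_last_lt {m : ℕ} (hm : Odd m) {σ : Perm (Fin (m + 2))} (hσ : IsUpDown σ) :
    σ (Fin.last (m + 1)) < σ (Fin.last m).castSucc := by
  have := hσ (Fin.last m).castSucc (by simp)
  rwa [if_neg (by simpa [Nat.odd_iff] using hm)] at this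

theorem of_castLE_of_apply_eq_last {m : ℕ} (hm : Odd m) {σ : Perm (Fin (m + 2))}
    {τ : Perm (Fin m)}
    (hpat : ∀ i j, τ i < τ j ↔ σ (Fin.castLE (by omega) i) < σ (Fin.castLE (by omega) j))
    (hτ : IsUpDown τ) (htop : σ (Fin.last m).castSucc = Fin.last (m + 1)) : IsUpDown σ := by
  have lt_top : ∀ i, i ≠ (Fin.last m).castSucc → σ i < Fin.last (m + 1) := fun i hi =>
    (Fin.le_last _).lt_of_ne (htop ▸ σ.injective.ne hi)
  intro i hi
  obtain hlt | heq | heq : i.val + 1 < m ∨ i.val + 1 = m ∨ i.val = m := by omega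
  · have := hτ ⟨i, by omega⟩ hlt
    split_ifs at this ⊢ <;> exact (hpat _ _).1 this
  · have hsucc : (⟨i + 1, hi⟩ : Fin (m + 2)) = (Fin.last m).castSucc := Fin.ext heq
    rw [if_pos (by rcases hm with ⟨r, hr⟩; omega), hsucc, htop]
    exact lt_top i (by simp [Fin.ext_iff]; omega)
  · have hi' : i = (Fin.last m).castSucc := Fin.ext heq
    have hsucc : (⟨i + 1, hi⟩ : Fin (m + 2)) = Fin.last (m + 1) := Fin.ext (by simp; omega)
    rw [if_neg (by rcases hm with ⟨r, hr⟩; omega), hsucc, hi', htop]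
    exact lt_top _ (by simp [Fin.ext_iff])

end IsUpDown

open Equiv.Perm

theorem mem_UDset {m : ℕ} {σ : Perm (Fin m)} : σ ∈ UDset m ↔ IsUpDown σ := by
  simp [UDset]

/-- The bijection sends `σ` to its last value and the standardization of its first `m` entries;
its inverse inserts the maximum into position `m`. -/
theorem card_filter_mmp1000_eq {m : ℕ} (hm : Odd m) :
    #((UDset (m + 2)).filter fun σ => mmp1000 σ = m) = (m + 1) * udCount m := by
  have hfilter : (UDset (m + 2)).filter (fun σ => mmp1000 σ = m) =
      (UDset (m + 2)).filter (fun σ => σ (Fin.last m).castSucc = Fin.last (m + 1)) :=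
    filter_congr fun σ hσ => σ.mmp1000_eq_iff ((mem_UDset.1 hσ).apply_last_lt hm)
  have hcard : (m + 1) * udCount m = #((univ.erase (Fin.last (m + 1))) ×ˢ UDset m) := by
    simp [card_product, udCount]
  rw [hfilter, hcard]
  refine card_nbij' (fun σ => (σ (Fin.last (m + 1)), σ.dropLast.dropLast))
    (fun p => decomposeLast.symm (p.1, decomposeLast.symm (Fin.last m, p.2))) ?_ ?_ ?_ ?_
  · intro σ hσ
    obtain ⟨hud, htop⟩ := mem_filter.1 hσ
    refine mem_product.2 ⟨mem_erase.2 ⟨?_, mem_univ _⟩, mem_UDset.2 ?_⟩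
    · exact fun he => (Fin.castSucc_lt_last (Fin.last m)).ne' (σ.injective (he.trans htop.symm))
    · exact (mem_UDset.1 hud).of_castLE (by omega) fun _ _ => σ.dropLast_dropLast_lt_iff
  · rintro ⟨v, τ⟩ hp
    obtain ⟨hv, hτ⟩ := mem_product.1 hp
    set σ := decomposeLast.symm (v, decomposeLast.symm (Fin.last m, τ))
    have htop : σ (Fin.last m).castSucc = Fin.last (m + 1) := by
      simp [σ, Fin.succAbove_ne_last_last (ne_of_mem_erase hv)]
    have hpat : ∀ i j,
        τ i < τ j ↔ σ (Fin.castLE (by omega) i) < σ (Fin.castLE (by omega) j) := by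
      intro i j
      rw [← dropLast_dropLast_lt_iff]
      simp [σ, dropLast_decomposeLast_symm]
    exact mem_filter.2 ⟨mem_UDset.2 (IsUpDown.of_castLE_of_apply_eq_last hm hpat
      (mem_UDset.1 hτ) htop), htop⟩
  · intro σ hσ
    have hdrop : (Fin.last m, σ.dropLast.dropLast) = decomposeLast σ.dropLast := by
      simp [dropLast_apply_last (mem_filter.1 hσ).2]
    simp only [hdrop, symm_apply_apply]
    exact decomposeLast.symm_apply_apply σ
  · rintro ⟨v, τ⟩ -
    simp [dropLast_decomposeLast_symm]

theorem udCount_pos (k : ℕ) : 0 < udCount (2 * k + 1) := by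
  induction k with
  | zero => exact card_pos.2 ⟨1, mem_UDset.2 fun i h => absurd h (by omega)⟩
  | succ k ih =>
    calc 0 < (2 * k + 2) * udCount (2 * k + 1) := Nat.mul_pos (by omega) ih
      _ = #((UDset (2 * k + 1 + 2)).filter fun σ => mmp1000 σ = 2 * k + 1) :=
        (card_filter_mmp1000_eq (odd_two_mul_add_one k)).symm
      _ ≤ udCount (2 * (k + 1) + 1) := card_filter_le _ _

theorem stmt13 (n : ℕ) (hn : 1 ≤ n) :
    (∀ σ ∈ UDset (2 * n + 1), mmp1000 σ ≤ 2 * n - 1) ∧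
    (∃ σ ∈ UDset (2 * n + 1), mmp1000 σ = 2 * n - 1) ∧
    BcountEq n (2 * n - 1) = 2 * n * udCount (2 * n - 1) := by
  obtain ⟨k, rfl⟩ : ∃ k, n = k + 1 := ⟨n - 1, by omega⟩
  have hodd : Odd (2 * k + 1) := odd_two_mul_add_one k
  have hcount : BcountEq (k + 1) (2 * k + 1) = (2 * k + 2) * udCount (2 * k + 1) :=
    card_filter_mmp1000_eq hodd
  have hbound (σ) (hσ : σ ∈ UDset (2 * k + 1 + 2)) : mmp1000 σ ≤ 2 * k + 1 :=
    σ.mmp1000_le (((mem_UDset.1 hσ).apply_last_lt hodd).trans_le (Fin.le_last _)).ne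
  obtain ⟨σ, hσ⟩ := card_pos.1 (hcount.trans_gt (Nat.mul_pos (by omega) (udCount_pos k)))
  exact ⟨hbound, ⟨σ, (mem_filter.1 hσ).1, (mem_filter.1 hσ).2⟩, hcount⟩
end

section
/- For all n ≥ 1, the maximum value of mmp^{(1,0,0,0)} over down-up permutations of length 2n is 2n-2, and the number of down-up permutations of length 2n attaining this maximum equals (2n-1) times the number of down-up permutations of length 2n-2 (where the number of down-up permutations of length 0 is 1). -/
open Finset

section Stmt14Aux

open scoped Classical

/-- Auxiliary function: insert value `last` at position `m` and value `v` at position `m+1`. -/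
private def Ffun (m : ℕ) (v : Fin (m+1)) (τ : Equiv.Perm (Fin m)) : Fin (m+2) → Fin (m+2) :=
  fun i => if h : (i : ℕ) < m then (v.succAbove (τ ⟨i, h⟩)).castSucc
    else if (i : ℕ) = m then Fin.last (m+1) else v.castSucc

private lemma Ffun_inj {m : ℕ} (v : Fin (m+1)) (τ : Equiv.Perm (Fin m)) :
    Function.Injective (Ffun m v τ) := by
  intro a b hab
  unfold Ffun at hab
  have ha2 := a.isLt; have hb2 := b.isLt
  by_cases h1 : (a : ℕ) < m <;> by_cases h2 : (b : ℕ) < m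
  · rw [dif_pos h1, dif_pos h2] at hab
    have h3 := Fin.castSucc_injective _ hab
    have h4 := v.succAbove_right_injective h3
    have h5 := τ.injective h4
    have h6 := congrArg Fin.val h5
    exact Fin.ext h6
  · rw [dif_pos h1, dif_neg h2] at hab
    by_cases h3 : (b : ℕ) = m
    · rw [if_pos h3] at hab
      exact absurd hab (Fin.ne_of_lt (Fin.castSucc_lt_last _))
    · rw [if_neg h3] at hab
      have := Fin.castSucc_injective _ hab
      exact absurd this (Fin.succAbove_ne v _)
  · rw [dif_neg h1, dif_pos h2] at hab
    by_cases h3 : (a : ℕ) = m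
    · rw [if_pos h3] at hab
      exact absurd hab.symm (Fin.ne_of_lt (Fin.castSucc_lt_last _))
    · rw [if_neg h3] at hab
      have := Fin.castSucc_injective _ hab.symm
      exact absurd this (Fin.succAbove_ne v _)
  · rw [dif_neg h1, dif_neg h2] at hab
    by_cases h3 : (a : ℕ) = m <;> by_cases h4 : (b : ℕ) = m
    · exact Fin.ext (h3.trans h4.symm)
    · rw [if_pos h3, if_neg h4] at hab
      exact absurd hab.symm (Fin.ne_of_lt (Fin.castSucc_lt_last _))
    · rw [if_neg h3, if_pos h4] at hab
      exact absurd hab (Fin.ne_of_lt (Fin.castSucc_lt_last _))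
    · exact Fin.ext (by omega)

private noncomputable def Phi (m : ℕ) (v : Fin (m+1)) (τ : Equiv.Perm (Fin m)) :
    Equiv.Perm (Fin (m+2)) :=
  Equiv.ofBijective _ (Finite.injective_iff_bijective.mp (Ffun_inj v τ))

private lemma Phi_apply {m : ℕ} (v : Fin (m+1)) (τ : Equiv.Perm (Fin m)) (i : Fin (m+2)) :
    Phi m v τ i = Ffun m v τ i := rfl

private lemma Phi_lt {m : ℕ} (v : Fin (m+1)) (τ : Equiv.Perm (Fin m)) (i : Fin (m+2))
    (h : (i : ℕ) < m) : Phi m v τ i = (v.succAbove (τ ⟨i, h⟩)).castSucc := by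
  rw [Phi_apply]; unfold Ffun; rw [dif_pos h]

private lemma Phi_m {m : ℕ} (v : Fin (m+1)) (τ : Equiv.Perm (Fin m)) :
    Phi m v τ ⟨m, Nat.lt_succ_of_lt (Nat.lt_succ_self _)⟩ = Fin.last (m+1) := by
  rw [Phi_apply]; unfold Ffun
  rw [dif_neg (by simp), if_pos rfl]

private lemma Phi_top {m : ℕ} (v : Fin (m+1)) (τ : Equiv.Perm (Fin m)) :
    Phi m v τ ⟨m+1, Nat.lt_succ_self _⟩ = v.castSucc := by
  rw [Phi_apply]; unfold Ffun
  rw [dif_neg (show ¬((m+1) < m) by omega), if_neg (show ¬(m+1 = m) by omega)]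

private lemma Phi_mem (k : ℕ) (v : Fin (2*k+1)) (τ : Equiv.Perm (Fin (2*k)))
    (hτ : τ ∈ DUset (2*k)) : Phi (2*k) v τ ∈ DUset (2*k+2) := by
  have hτ' : IsDownUp τ := (Finset.mem_filter.mp hτ).2
  rw [DUset, Finset.mem_filter]
  refine ⟨Finset.mem_univ _, ?_⟩
  intro i h
  by_cases h1 : (i : ℕ) + 1 < 2*k
  · have h0 : (i : ℕ) < 2*k := by omega
    rw [Phi_lt v τ i h0, Phi_lt v τ ⟨(i : ℕ)+1, h⟩ h1]
    simp only [Fin.castSucc_lt_castSucc_iff, Fin.succAbove_lt_succAbove_iff]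
    exact hτ' ⟨i, h0⟩ h1
  · by_cases h2 : (i : ℕ) < 2*k
    · have he : (i : ℕ) + 1 = 2*k := by omega
      rw [Phi_lt v τ i h2]
      have hm : (⟨(i : ℕ)+1, h⟩ : Fin (2*k+2)) = ⟨2*k, Nat.lt_succ_of_lt (Nat.lt_succ_self _)⟩ := Fin.ext he
      rw [hm, Phi_m, if_neg (show ¬((i : ℕ) % 2 = 0) by omega)]
      exact Fin.castSucc_lt_last _
    · have he : (i : ℕ) = 2*k := by omega
      have hi : i = ⟨2*k, Nat.lt_succ_of_lt (Nat.lt_succ_self _)⟩ := Fin.ext he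
      have hm : (⟨(i : ℕ)+1, h⟩ : Fin (2*k+2)) = ⟨2*k+1, Nat.lt_succ_self _⟩ :=
        Fin.ext (show (i : ℕ)+1 = 2*k+1 by omega)
      rw [hm, hi, Phi_m, Phi_top, if_pos (show 2*k % 2 = 0 by omega)]
      exact Fin.castSucc_lt_last _

private lemma miss2 {α : Type*} [Fintype α] [DecidableEq α] {s : Finset α} {a b : α}
    (hab : a ≠ b) (ha : a ∉ s) (hb : b ∉ s) : s.card + 2 ≤ Fintype.card α := by
  have h1 : (insert a (insert b s)).card ≤ Fintype.card α := Finset.card_le_univ _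
  rw [Finset.card_insert_of_notMem (by simp [hab, ha]),
    Finset.card_insert_of_notMem hb] at h1
  omega

private lemma miss3 {α : Type*} [Fintype α] [DecidableEq α] {s : Finset α} {a b c : α}
    (hab : a ≠ b) (hac : a ≠ c) (hbc : b ≠ c)
    (ha : a ∉ s) (hb : b ∉ s) (hc : c ∉ s) : s.card + 3 ≤ Fintype.card α := by
  have h1 : (insert a (insert b (insert c s))).card ≤ Fintype.card α := Finset.card_le_univ _
  rw [Finset.card_insert_of_notMem (by simp [hab, hac, ha]),
    Finset.card_insert_of_notMem (by simp [hbc, hb]),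
    Finset.card_insert_of_notMem hc] at h1
  omega

private lemma du_step (k : ℕ) (σ : Equiv.Perm (Fin (2*k+2))) (hσ : σ ∈ DUset (2*k+2)) :
    σ ⟨2*k+1, Nat.lt_succ_self _⟩ < σ ⟨2*k, Nat.lt_succ_of_lt (Nat.lt_succ_self _)⟩ := by
  have hdu : IsDownUp σ := (Finset.mem_filter.mp hσ).2
  have h1 := hdu ⟨2*k, Nat.lt_succ_of_lt (Nat.lt_succ_self _)⟩ (by exact Nat.lt_succ_self _)
  rwa [if_pos (show 2*k % 2 = 0 by omega)] at h1

private lemma upper (k : ℕ) (σ : Equiv.Perm (Fin (2*k+2))) (hσ : σ ∈ DUset (2*k+2)) :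
    mmp1000 σ ≤ 2*k := by
  set L : Fin (2*k+2) := ⟨2*k+1, Nat.lt_succ_self _⟩ with hL
  have hLv : (L : ℕ) = 2*k+1 := rfl
  set p : Fin (2*k+2) := σ.symm (Fin.last (2*k+1)) with hp
  have hps : σ p = Fin.last (2*k+1) := σ.apply_symm_apply _
  have hstep := du_step k σ hσ
  have hpL : p ≠ L := by
    intro h
    rw [h] at hps
    exact absurd (hps ▸ hstep) (not_lt.mpr (Fin.le_last _))
  have hpF : p ∉ Finset.univ.filter (fun i : Fin (2*k+2) => ∃ j, i < j ∧ σ i < σ j) := by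
    simp only [Finset.mem_filter, Finset.mem_univ, true_and, not_exists]
    intro j ⟨_, hlt⟩
    rw [hps] at hlt
    exact absurd hlt (not_lt.mpr (Fin.le_last _))
  have hLF : L ∉ Finset.univ.filter (fun i : Fin (2*k+2) => ∃ j, i < j ∧ σ i < σ j) := by
    simp only [Finset.mem_filter, Finset.mem_univ, true_and, not_exists]
    intro j ⟨hj, _⟩
    have := j.isLt
    rw [Fin.lt_def] at hj
    omega
  have h2 := miss2 hpL hpF hLF
  rw [Fintype.card_fin] at h2
  unfold mmp1000
  omega

private lemma charac (k : ℕ) (σ : Equiv.Perm (Fin (2*k+2))) (hσ : σ ∈ DUset (2*k+2)) :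
    mmp1000 σ = 2*k ↔ σ ⟨2*k, Nat.lt_succ_of_lt (Nat.lt_succ_self _)⟩ = Fin.last (2*k+1) := by
  set L : Fin (2*k+2) := ⟨2*k+1, Nat.lt_succ_self _⟩ with hL
  have hLv : (L : ℕ) = 2*k+1 := rfl
  set pm : Fin (2*k+2) := ⟨2*k, Nat.lt_succ_of_lt (Nat.lt_succ_self _)⟩ with hpm
  have hpmv : (pm : ℕ) = 2*k := rfl
  have hstep := du_step k σ hσ
  constructor
  · intro hm
    by_contra hne
    set p : Fin (2*k+2) := σ.symm (Fin.last (2*k+1)) with hp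
    have hps : σ p = Fin.last (2*k+1) := σ.apply_symm_apply _
    have hpL : p ≠ L := by
      intro h
      rw [h] at hps
      exact absurd (hps ▸ hstep) (not_lt.mpr (Fin.le_last _))
    have hppm : p ≠ pm := by
      intro h
      exact hne (h ▸ hps)
    have hplt : (p : ℕ) < 2*k := by
      have h1 := p.isLt
      have h2 : (p : ℕ) ≠ 2*k := fun h => hppm (Fin.ext (h.trans hpmv.symm))
      have h3 : (p : ℕ) ≠ 2*k+1 := fun h => hpL (Fin.ext (h.trans hLv.symm))
      omega
    set S : Finset (Fin (2*k+2)) := Finset.univ.filter (fun j => p < j) with hS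
    have hLS : L ∈ S := by
      simp only [hS, Finset.mem_filter, Finset.mem_univ, true_and, Fin.lt_def]
      omega
    have hpmS : pm ∈ S := by
      simp only [hS, Finset.mem_filter, Finset.mem_univ, true_and, Fin.lt_def]
      omega
    obtain ⟨q, hqS, hq⟩ := S.exists_max_image σ ⟨L, hLS⟩
    have hqL : q ≠ L := by
      intro h
      have h1 : σ pm ≤ σ q := hq pm hpmS
      rw [h] at h1
      exact absurd hstep (not_lt.mpr h1)
    have hpq : p ≠ q := by
      have := (Finset.mem_filter.mp hqS).2
      exact Fin.ne_of_lt this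
    have hqF : q ∉ Finset.univ.filter (fun i : Fin (2*k+2) => ∃ j, i < j ∧ σ i < σ j) := by
      simp only [Finset.mem_filter, Finset.mem_univ, true_and, not_exists]
      intro j ⟨hj, hlt⟩
      have hpq' : p < q := (Finset.mem_filter.mp hqS).2
      have hjS : j ∈ S := by
        simp only [hS, Finset.mem_filter, Finset.mem_univ, true_and]
        exact lt_trans hpq' hj
      exact absurd hlt (not_lt.mpr (hq j hjS))
    have hpF : p ∉ Finset.univ.filter (fun i : Fin (2*k+2) => ∃ j, i < j ∧ σ i < σ j) := by
      simp only [Finset.mem_filter, Finset.mem_univ, true_and, not_exists]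
      intro j ⟨_, hlt⟩
      rw [hps] at hlt
      exact absurd hlt (not_lt.mpr (Fin.le_last _))
    have hLF : L ∉ Finset.univ.filter (fun i : Fin (2*k+2) => ∃ j, i < j ∧ σ i < σ j) := by
      simp only [Finset.mem_filter, Finset.mem_univ, true_and, not_exists]
      intro j ⟨hj, _⟩
      have := j.isLt
      rw [Fin.lt_def] at hj
      omega
    have h3 := miss3 hpq hpL hqL hpF hqF hLF
    rw [Fintype.card_fin] at h3
    unfold mmp1000 at hm
    omega
  · intro hlast
    have hFeq : Finset.univ.filter (fun i : Fin (2*k+2) => ∃ j, i < j ∧ σ i < σ j)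
        = Finset.univ \ {pm, L} := by
      ext i
      simp only [Finset.mem_filter, Finset.mem_univ, true_and, Finset.mem_sdiff,
        Finset.mem_insert, Finset.mem_singleton]
      constructor
      · rintro ⟨j, hj, hlt⟩
        push_neg
        refine ⟨?_, ?_⟩
        · intro h
          rw [h, hlast] at hlt
          exact absurd hlt (not_lt.mpr (Fin.le_last _))
        · intro h
          rw [h, Fin.lt_def] at hj
          have := j.isLt
          omega
      · intro h
        push_neg at h
        obtain ⟨h1, h2⟩ := h
        have hilt : (i : ℕ) < 2*k := by
          have := i.isLt
          have e1 : (i : ℕ) ≠ 2*k := fun h => h1 (Fin.ext (h.trans hpmv.symm))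
          have e2 : (i : ℕ) ≠ 2*k+1 := fun h => h2 (Fin.ext (h.trans hLv.symm))
          omega
        refine ⟨pm, by rw [Fin.lt_def, hpmv]; exact hilt, ?_⟩
        rw [hlast]
        refine lt_of_le_of_ne (Fin.le_last _) ?_
        intro h
        have : σ i = σ pm := by rw [h, hlast]
        exact h1 (σ.injective this)
    unfold mmp1000
    rw [hFeq, Finset.card_sdiff_of_subset (Finset.subset_univ _), Finset.card_univ, Fintype.card_fin,
      Finset.card_pair (Fin.ne_of_val_ne (by rw [hpmv, hLv]; omega))]
    omega

private lemma du_nonempty : ∀ k : ℕ, (DUset (2*k)).Nonempty := by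
  intro k
  induction k with
  | zero =>
    refine ⟨1, Finset.mem_filter.mpr ⟨Finset.mem_univ _, ?_⟩⟩
    intro i
    exact i.elim0
  | succ k ih =>
    obtain ⟨τ, hτ⟩ := ih
    have h2 : 2*(k+1) = 2*k+2 := by ring
    rw [h2]
    exact ⟨Phi (2*k) 0 τ, Phi_mem k 0 τ hτ⟩

set_option maxHeartbeats 2000000 in
private lemma count (k : ℕ) :
    ((DUset (2*k+2)).filter (fun σ => σ ⟨2*k, Nat.lt_succ_of_lt (Nat.lt_succ_self _)⟩ = Fin.last (2*k+1))).card
      = (2*k+1) * (DUset (2*k)).card := by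
  have key : ((Finset.univ : Finset (Fin (2*k+1))) ×ˢ DUset (2*k)).card
      = ((DUset (2*k+2)).filter (fun σ => σ ⟨2*k, Nat.lt_succ_of_lt (Nat.lt_succ_self _)⟩ = Fin.last (2*k+1))).card := by
    apply Finset.card_bij
      (fun (p : Fin (2*k+1) × Equiv.Perm (Fin (2*k)))
        (_ : p ∈ (Finset.univ : Finset (Fin (2*k+1))) ×ˢ DUset (2*k)) => Phi (2*k) p.1 p.2)
    · intro p hp
      have hmem := (Finset.mem_product.mp hp).2
      exact Finset.mem_filter.mpr ⟨Phi_mem k p.1 p.2 hmem, Phi_m p.1 p.2⟩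
    · rintro ⟨v, τ⟩ _ ⟨w, ρ⟩ _ heq
      have happ : ∀ x, Phi (2*k) v τ x = Phi (2*k) w ρ x := fun x => congrArg (fun e => e x) heq
      have hv : v = w := by
        have h0 := happ ⟨2*k+1, Nat.lt_succ_self _⟩
        rw [Phi_top, Phi_top] at h0
        exact Fin.castSucc_injective _ h0
      subst hv
      have hτ : τ = ρ := by
        apply Equiv.ext
        intro x
        have hx : (x : ℕ) < 2*k := x.isLt
        have h0 := happ ⟨(x : ℕ), Nat.lt_succ_of_lt (Nat.lt_succ_of_lt x.isLt)⟩
        rw [Phi_lt v τ _ hx, Phi_lt v ρ _ hx] at h0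
        have h1 := v.succAbove_right_injective (Fin.castSucc_injective _ h0)
        have h2 : (⟨((⟨(x : ℕ), Nat.lt_succ_of_lt (Nat.lt_succ_of_lt x.isLt)⟩ : Fin (2*k+2)) : ℕ), hx⟩ : Fin (2*k)) = x :=
          Fin.ext rfl
        rwa [h2] at h1
      rw [hτ]
    · intro σ hσt
      obtain ⟨hσ, hlast⟩ := Finset.mem_filter.mp hσt
      have hdu : IsDownUp σ := (Finset.mem_filter.mp hσ).2
      have hLne : σ ⟨2*k+1, Nat.lt_succ_self _⟩ ≠ Fin.last (2*k+1) := by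
        intro h
        have h1 := σ.injective (h.trans hlast.symm)
        have h2 := congrArg Fin.val h1
        have h3 : 2*k+1 = 2*k := h2
        omega
      set v : Fin (2*k+1) := (σ ⟨2*k+1, Nat.lt_succ_self _⟩).castPred hLne with hv
      have hvs : σ ⟨2*k+1, Nat.lt_succ_self _⟩ = v.castSucc := (Fin.castSucc_castPred _ _).symm
      have hne' : ∀ x : Fin (2*k), σ ⟨(x : ℕ), Nat.lt_succ_of_lt (Nat.lt_succ_of_lt x.isLt)⟩ ≠ Fin.last (2*k+1) := by
        intro x h
        have h1 := σ.injective (h.trans hlast.symm)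
        have h2 := congrArg Fin.val h1
        have h3 : (x : ℕ) = 2*k := h2
        have := x.isLt
        omega
      have hgex : ∀ x : Fin (2*k), ∃ z : Fin (2*k),
          (v.succAbove z).castSucc = σ ⟨(x : ℕ), Nat.lt_succ_of_lt (Nat.lt_succ_of_lt x.isLt)⟩ := by
        intro x
        have hyv : (σ ⟨(x : ℕ), Nat.lt_succ_of_lt (Nat.lt_succ_of_lt x.isLt)⟩).castPred (hne' x) ≠ v := by
          intro h
          have h1 : σ ⟨(x : ℕ), Nat.lt_succ_of_lt (Nat.lt_succ_of_lt x.isLt)⟩ = σ ⟨2*k+1, Nat.lt_succ_self _⟩ := by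
            rw [← Fin.castSucc_castPred (σ ⟨(x : ℕ), Nat.lt_succ_of_lt (Nat.lt_succ_of_lt x.isLt)⟩) (hne' x), h, ← hvs]
          have h2 := congrArg Fin.val (σ.injective h1)
          have h3 : (x : ℕ) = 2*k+1 := h2
          have := x.isLt
          omega
        obtain ⟨z, hz⟩ := Fin.exists_succAbove_eq hyv
        exact ⟨z, by rw [hz, Fin.castSucc_castPred]⟩
      choose g hg using hgex
      have hginj : Function.Injective g := by
        intro a b h
        have h1 : σ ⟨(a : ℕ), Nat.lt_succ_of_lt (Nat.lt_succ_of_lt a.isLt)⟩ = σ ⟨(b : ℕ), Nat.lt_succ_of_lt (Nat.lt_succ_of_lt b.isLt)⟩ := by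
          rw [← hg a, ← hg b, h]
        have h2 := congrArg Fin.val (σ.injective h1)
        have h3 : (a : ℕ) = (b : ℕ) := h2
        exact Fin.ext h3
      obtain ⟨τ, hτap⟩ : ∃ τ : Equiv.Perm (Fin (2*k)), ∀ x, τ x = g x :=
        ⟨Equiv.ofBijective g (Finite.injective_iff_bijective.mp hginj), fun _ => rfl⟩
      have hmono : ∀ a b : Fin (2*k),
          (τ a < τ b ↔ σ ⟨(a : ℕ), Nat.lt_succ_of_lt (Nat.lt_succ_of_lt a.isLt)⟩ < σ ⟨(b : ℕ), Nat.lt_succ_of_lt (Nat.lt_succ_of_lt b.isLt)⟩) := by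
        intro a b
        rw [hτap, hτap, ← Fin.succAbove_lt_succAbove_iff (p := v),
          ← Fin.castSucc_lt_castSucc_iff, hg, hg]
      have hτdu : IsDownUp τ := by
        intro x hx
        have hx2 : (x : ℕ) + 1 < 2*k+2 := by omega
        have hstep := hdu ⟨(x : ℕ), Nat.lt_succ_of_lt (Nat.lt_succ_of_lt x.isLt)⟩ hx2
        split_ifs with hpar
        · rw [hmono]
          rw [if_pos hpar] at hstep
          exact hstep
        · rw [if_neg hpar] at hstep
          rw [hmono]
          exact hstep
      have hτmem : τ ∈ DUset (2*k) := Finset.mem_filter.mpr ⟨Finset.mem_univ _, hτdu⟩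
      refine ⟨(v, τ), Finset.mem_product.mpr ⟨Finset.mem_univ _, hτmem⟩, ?_⟩
      apply Equiv.ext
      intro j
      by_cases hj : (j : ℕ) < 2*k
      · rw [Phi_lt v τ j hj, hτap, hg]
      · by_cases hj2 : (j : ℕ) = 2*k
        · have hje : j = ⟨2*k, Nat.lt_succ_of_lt (Nat.lt_succ_self _)⟩ := Fin.ext hj2
          rw [hje, Phi_m, hlast]
        · have hje : j = ⟨2*k+1, Nat.lt_succ_self _⟩ :=
            Fin.ext (show (j : ℕ) = 2*k+1 by have := j.isLt; omega)
          rw [hje, Phi_top, hvs]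
  rw [Finset.card_product, Finset.card_univ, Fintype.card_fin] at key
  exact key.symm

end Stmt14Aux

theorem stmt14 (n : ℕ) (hn : 1 ≤ n) :
    (∀ σ ∈ DUset (2 * n), mmp1000 σ ≤ 2 * n - 2) ∧
    (∃ σ ∈ DUset (2 * n), mmp1000 σ = 2 * n - 2) ∧
    CcountEq n (2 * n - 2) = (2 * n - 1) * duCount (2 * n - 2) := by
  obtain ⟨k, rfl⟩ : ∃ k, n = k + 1 := ⟨n - 1, by omega⟩
  have h2 : 2*(k+1) = 2*k+2 := by ring
  have h3 : 2*(k+1) - 2 = 2*k := by omega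
  have h4 : 2*(k+1) - 1 = 2*k+1 := by omega
  refine ⟨?_, ?_, ?_⟩
  · rw [h3, h2]
    intro σ hσ
    exact upper k σ hσ
  · rw [h3, h2]
    obtain ⟨τ, hτ⟩ := du_nonempty k
    have hmem := Phi_mem k 0 τ hτ
    exact ⟨Phi (2*k) 0 τ, hmem, (charac k _ hmem).mpr (Phi_m _ _)⟩
  · unfold CcountEq duCount
    rw [h3, h4, h2]
    have hfe : (DUset (2*k+2)).filter (fun σ => mmp1000 σ = 2*k)
        = (DUset (2*k+2)).filter (fun σ => σ ⟨2*k, Nat.lt_succ_of_lt (Nat.lt_succ_self _)⟩ = Fin.last (2*k+1)) := by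
      apply Finset.filter_congr
      intro σ hσ
      exact charac k σ hσ
    rw [hfe, count k]
end

section
/- For all n ≥ 1, the maximum value of mmp^{(1,0,0,0)} over down-up permutations of length 2n+1 is 2n, and the number of down-up permutations of length 2n+1 attaining this maximum equals the number of down-up permutations of length 2n. -/
open Finset

-- extension: append the max at the end
def extL {m : ℕ} (σ : Equiv.Perm (Fin m)) : Equiv.Perm (Fin (m + 1)) where
  toFun i := if h : (i : ℕ) < m then Fin.castSucc (σ ⟨i, h⟩) else Fin.last m
  invFun i := if h : (i : ℕ) < m then Fin.castSucc (σ.symm ⟨i, h⟩) else Fin.last m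
  left_inv i := by
    dsimp only
    by_cases h : (i : ℕ) < m
    · rw [dif_pos h]
      have hx : ((Fin.castSucc (σ ⟨i, h⟩)) : ℕ) < m := (σ ⟨i, h⟩).isLt
      rw [dif_pos hx]
      apply Fin.ext
      simp
    · rw [dif_neg h, dif_neg (by simp : ¬ ((Fin.last m : ℕ) < m))]
      apply Fin.ext
      have := i.isLt
      simp only [Fin.val_last]
      omega
  right_inv i := by
    dsimp only
    by_cases h : (i : ℕ) < m
    · rw [dif_pos h]
      have hx : ((Fin.castSucc (σ.symm ⟨i, h⟩)) : ℕ) < m := (σ.symm ⟨i, h⟩).isLt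
      rw [dif_pos hx]
      apply Fin.ext
      simp
    · rw [dif_neg h, dif_neg (by simp : ¬ ((Fin.last m : ℕ) < m))]
      apply Fin.ext
      have := i.isLt
      simp only [Fin.val_last]
      omega

lemma extL_apply_lt {m : ℕ} (σ : Equiv.Perm (Fin m)) (k : Fin (m + 1)) (hk : (k : ℕ) < m) :
    extL σ k = Fin.castSucc (σ ⟨k, hk⟩) := dif_pos hk

lemma extL_apply_last {m : ℕ} (σ : Equiv.Perm (Fin m)) :
    extL σ (Fin.last m) = Fin.last m := dif_neg (lt_irrefl m)

lemma resL_aux {m : ℕ} (τ : Equiv.Perm (Fin (m + 1))) (hτ : τ (Fin.last m) = Fin.last m)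
    (j : Fin m) : ((τ j.castSucc : Fin (m+1)) : ℕ) < m := by
  have h1 : τ j.castSucc ≠ Fin.last m := by
    intro h
    exact (Fin.castSucc_lt_last j).ne (τ.injective (h.trans hτ.symm))
  have h2 := (τ j.castSucc).isLt
  have h3 : ((τ j.castSucc : Fin (m+1)) : ℕ) ≠ m := fun h => h1 (Fin.ext (by simpa using h))
  omega

-- restriction, when last is fixed
def resL {m : ℕ} (τ : Equiv.Perm (Fin (m + 1))) (hτ : τ (Fin.last m) = Fin.last m) :
    Equiv.Perm (Fin m) where
  toFun j := ⟨(τ j.castSucc : ℕ), resL_aux τ hτ j⟩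
  invFun j := ⟨(τ.symm j.castSucc : ℕ), resL_aux τ.symm (by rw [Equiv.symm_apply_eq, hτ]) j⟩
  left_inv j := by
    apply Fin.ext
    have : (⟨(τ j.castSucc : ℕ), resL_aux τ hτ j⟩ : Fin m).castSucc = τ j.castSucc :=
      Fin.ext (by simp)
    simp [this]
  right_inv j := by
    apply Fin.ext
    have : (⟨(τ.symm j.castSucc : ℕ), resL_aux τ.symm (by rw [Equiv.symm_apply_eq, hτ]) j⟩ : Fin m).castSucc
        = τ.symm j.castSucc := Fin.ext (by simp)
    simp [this]

lemma resL_apply {m : ℕ} (τ : Equiv.Perm (Fin (m + 1))) (hτ : τ (Fin.last m) = Fin.last m)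
    (j : Fin m) : ((resL τ hτ j : Fin m) : ℕ) = ((τ j.castSucc : Fin (m+1)) : ℕ) := rfl

lemma mmp_le {m : ℕ} (τ : Equiv.Perm (Fin (m + 1))) : mmp1000 τ ≤ m := by
  have hs : (Finset.univ.filter (fun i : Fin (m+1) => ∃ j : Fin (m+1), i < j ∧ τ i < τ j))
      ⊆ Finset.univ.erase (Fin.last m) := by
    intro i hi
    rw [Finset.mem_filter] at hi
    obtain ⟨-, j, hj, -⟩ := hi
    exact Finset.mem_erase.mpr ⟨(lt_of_lt_of_le hj (Fin.le_last j)).ne, Finset.mem_univ i⟩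
  calc mmp1000 τ ≤ (Finset.univ.erase (Fin.last m)).card := Finset.card_le_card hs
    _ = m := by rw [Finset.card_erase_of_mem (Finset.mem_univ _)]; simp

lemma mmp_eq_iff_s15 {m : ℕ} (τ : Equiv.Perm (Fin (m + 1))) :
    mmp1000 τ = m ↔ τ (Fin.last m) = Fin.last m := by
  constructor
  · intro h
    have hs : (Finset.univ.filter (fun i : Fin (m+1) => ∃ j : Fin (m+1), i < j ∧ τ i < τ j))
        ⊆ Finset.univ.erase (Fin.last m) := by
      intro i hi
      rw [Finset.mem_filter] at hi
      obtain ⟨-, j, hj, -⟩ := hi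
      exact Finset.mem_erase.mpr ⟨(lt_of_lt_of_le hj (Fin.le_last j)).ne, Finset.mem_univ i⟩
    have hcard : (Finset.univ.erase (Fin.last m) : Finset (Fin (m+1))).card ≤
        (Finset.univ.filter (fun i : Fin (m+1) => ∃ j : Fin (m+1), i < j ∧ τ i < τ j)).card := by
      have hm' : (Finset.univ.filter (fun i : Fin (m+1) => ∃ j : Fin (m+1), i < j ∧ τ i < τ j)).card = m := h
      rw [hm', Finset.card_erase_of_mem (Finset.mem_univ _), Finset.card_univ, Fintype.card_fin]
      omega
    have heq := Finset.eq_of_subset_of_card_le hs hcard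
    by_contra hne
    have hi0 : τ.symm (Fin.last m) ≠ Fin.last m := by
      intro h'
      apply hne
      have h2 := congrArg τ h'
      rw [Equiv.apply_symm_apply] at h2
      exact h2.symm
    have : τ.symm (Fin.last m) ∈ Finset.univ.erase (Fin.last m) :=
      Finset.mem_erase.mpr ⟨hi0, Finset.mem_univ _⟩
    rw [← heq, Finset.mem_filter] at this
    obtain ⟨-, j, -, hlt⟩ := this
    rw [Equiv.apply_symm_apply] at hlt
    exact absurd hlt (not_lt.mpr (Fin.le_last _))
  · intro h
    have heq : (Finset.univ.filter (fun i : Fin (m+1) => ∃ j : Fin (m+1), i < j ∧ τ i < τ j))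
        = Finset.univ.erase (Fin.last m) := by
      ext i
      simp only [Finset.mem_filter, Finset.mem_erase, Finset.mem_univ, true_and, and_true]
      constructor
      · rintro ⟨j, hj, -⟩
        exact (lt_of_lt_of_le hj (Fin.le_last j)).ne
      · intro hne
        refine ⟨Fin.last m, ?_, ?_⟩
        · exact lt_of_le_of_ne (Fin.le_last i) hne
        · rw [h]
          exact lt_of_le_of_ne (Fin.le_last _) (fun h' => hne (τ.injective (h'.trans h.symm)))
    unfold mmp1000
    rw [heq, Finset.card_erase_of_mem (Finset.mem_univ _)]
    simp

lemma isDownUp_extL {m : ℕ} (hm : m % 2 = 0) {σ : Equiv.Perm (Fin m)} (hσ : IsDownUp σ) :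
    IsDownUp (extL σ) := by
  intro i h
  have hi : (i : ℕ) < m := by omega
  rw [extL_apply_lt σ i hi]
  by_cases h2 : (i : ℕ) + 1 < m
  · rw [extL_apply_lt σ ⟨(i:ℕ)+1, h⟩ h2]
    have := hσ ⟨i, hi⟩ h2
    simp only [Fin.castSucc_lt_castSucc_iff]
    exact this
  · -- i + 1 = m, so i = m - 1, odd
    have him : (i : ℕ) + 1 = m := by omega
    have hodd : (i : ℕ) % 2 = 1 := by omega
    rw [if_neg (by omega)]
    have hlast : (⟨(i:ℕ)+1, h⟩ : Fin (m+1)) = Fin.last m := Fin.ext (by simp [him])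
    rw [hlast, extL_apply_last]
    exact Fin.castSucc_lt_last _

lemma isDownUp_resL {m : ℕ} {τ : Equiv.Perm (Fin (m + 1))} (hτ : IsDownUp τ)
    (hfix : τ (Fin.last m) = Fin.last m) : IsDownUp (resL τ hfix) := by
  intro i h
  have h' : ((i.castSucc : Fin (m+1)) : ℕ) + 1 < m + 1 := by simp only [Fin.coe_castSucc]; omega
  have := hτ i.castSucc h'
  have hcast : (⟨((i.castSucc : Fin (m+1)) : ℕ) + 1, h'⟩ : Fin (m+1)) =
      (⟨(i:ℕ)+1, h⟩ : Fin m).castSucc := Fin.ext (by simp)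
  rw [hcast] at this
  simp only [Fin.coe_castSucc] at this
  have e1 : ∀ a b : Fin m, (resL τ hfix a < resL τ hfix b) ↔ (τ a.castSucc < τ b.castSucc) := by
    intro a b
    rw [Fin.lt_def, Fin.lt_def, resL_apply, resL_apply]
  by_cases hp : (i : ℕ) % 2 = 0
  · rw [if_pos hp] at this ⊢
    rw [e1]
    exact this
  · rw [if_neg hp] at this ⊢
    rw [e1]
    exact this

lemma resL_extL {m : ℕ} (σ : Equiv.Perm (Fin m)) (h : extL σ (Fin.last m) = Fin.last m) :
    resL (extL σ) h = σ := by
  apply Equiv.ext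
  intro j
  apply Fin.ext
  rw [resL_apply]
  rw [extL_apply_lt σ j.castSucc (by simp [j.isLt])]
  simp

lemma extL_resL {m : ℕ} (τ : Equiv.Perm (Fin (m + 1))) (h : τ (Fin.last m) = Fin.last m) :
    extL (resL τ h) = τ := by
  apply Equiv.ext
  intro i
  by_cases hi : (i : ℕ) < m
  · rw [extL_apply_lt _ i hi]
    apply Fin.ext
    simp only [Fin.coe_castSucc]
    rw [resL_apply]
    congr 1
  · have : i = Fin.last m := Fin.ext (by have := i.isLt; simp only [Fin.val_last]; omega)
    rw [this, extL_apply_last, h]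

-- the base down-up permutation 1 0 3 2 5 4 ...
def baseF (m : ℕ) (hm : m % 2 = 0) (i : Fin m) : Fin m :=
  ⟨if (i : ℕ) % 2 = 0 then (i : ℕ) + 1 else (i : ℕ) - 1, by
    have := i.isLt; by_cases h : (i : ℕ) % 2 = 0 <;> simp [h] <;> omega⟩

lemma baseF_inv (m : ℕ) (hm : m % 2 = 0) : Function.Involutive (baseF m hm) := by
  intro i
  apply Fin.ext
  simp only [baseF]
  by_cases h : (i : ℕ) % 2 = 0
  · simp [h]; omega
  · have h1 : (i : ℕ) % 2 = 1 := by omega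
    have h2 : (i : ℕ) ≠ 0 := by omega
    simp only [if_neg h]
    rw [if_pos (by omega)]
    omega

def basePerm (m : ℕ) (hm : m % 2 = 0) : Equiv.Perm (Fin m) :=
  (baseF_inv m hm).toPerm

lemma basePerm_downUp (m : ℕ) (hm : m % 2 = 0) : IsDownUp (basePerm m hm) := by
  intro i h
  have happ : ∀ (k : Fin m), ((basePerm m hm k : Fin m) : ℕ) =
      if (k : ℕ) % 2 = 0 then (k : ℕ) + 1 else (k : ℕ) - 1 := fun k => rfl
  by_cases hp : (i : ℕ) % 2 = 0
  · rw [if_pos hp, Fin.lt_def, happ, happ]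
    simp only [if_pos hp]
    rw [if_neg (by omega)]
    omega
  · rw [if_neg hp, Fin.lt_def, happ, happ]
    simp only [if_neg hp]
    rw [if_pos (by omega)]
    omega

theorem stmt15 (n : ℕ) (hn : 1 ≤ n) :
    (∀ σ ∈ DUset (2 * n + 1), mmp1000 σ ≤ 2 * n) ∧
    (∃ σ ∈ DUset (2 * n + 1), mmp1000 σ = 2 * n) ∧
    DcountEq n (2 * n) = duCount (2 * n) := by
  classical
  refine ⟨?_, ?_, ?_⟩
  · intro σ _
    exact mmp_le σ
  · refine ⟨extL (basePerm (2 * n) (by omega)), ?_, ?_⟩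
    · unfold DUset
      rw [Finset.mem_filter]
      exact ⟨Finset.mem_univ _, isDownUp_extL (by omega) (basePerm_downUp _ _)⟩
    · exact (mmp_eq_iff_s15 _).mpr (extL_apply_last _)
  · unfold DcountEq duCount
    refine Finset.card_bij' (fun τ hτ => resL τ ((mmp_eq_iff_s15 τ).mp (Finset.mem_filter.mp hτ).2))
      (fun σ _ => extL σ) ?_ ?_ ?_ ?_
    · intro a ha
      have h1 := Finset.mem_filter.mp ha
      have h2 : IsDownUp a := by
        have h3 := h1.1
        unfold DUset at h3
        exact (Finset.mem_filter.mp h3).2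
      unfold DUset
      exact Finset.mem_filter.mpr ⟨Finset.mem_univ _, isDownUp_resL h2 _⟩
    · intro b hb
      have h2 : IsDownUp b := by
        unfold DUset at hb
        exact (Finset.mem_filter.mp hb).2
      refine Finset.mem_filter.mpr ⟨?_, (mmp_eq_iff_s15 _).mpr (extL_apply_last _)⟩
      unfold DUset
      exact Finset.mem_filter.mpr ⟨Finset.mem_univ _, isDownUp_extL (by omega) h2⟩
    · intro a ha
      exact extL_resL a _
    · intro b hb
      exact resL_extL b _
end

section
/- If σ is an up-down permutation of length 2n (n ≥ 2) with mmp^{(1,0,0,0)}(σ) = n, then σ(2) = 2n. -/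
open Finset

theorem stmt16 (n : ℕ) (hn : 2 ≤ n) (σ : Equiv.Perm (Fin (2 * n)))
    (h : IsUpDown σ) (hm : mmp1000 σ = n) :
    σ ⟨1, by omega⟩ = ⟨2 * n - 1, by omega⟩ := by
  classical
  set S := Finset.univ.filter (fun i : Fin (2*n) => ∃ j : Fin (2*n), i < j ∧ σ i < σ j) with hS
  set E := Finset.univ.filter (fun i : Fin (2*n) => (i:ℕ) % 2 = 0) with hE
  have hsub : E ⊆ S := by
    intro i hi
    simp only [hE, Finset.mem_filter, Finset.mem_univ, true_and] at hi
    have hlt := i.isLt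
    have h2 : (i:ℕ) + 1 < 2*n := by omega
    have hud := h i h2
    rw [if_pos hi] at hud
    simp only [hS, Finset.mem_filter, Finset.mem_univ, true_and]
    exact ⟨⟨(i:ℕ)+1, h2⟩, by simp [Fin.lt_def], hud⟩
  have hcardE : E.card = n := by
    rw [hE]
    rw [Finset.card_bij' (fun (a : Fin (2*n)) (ha : a ∈ Finset.univ.filter
        (fun i : Fin (2*n) => (i:ℕ) % 2 = 0)) => ((⟨(a:ℕ)/2, by
          have := a.isLt; omega⟩ : Fin n)))
      (fun (b : Fin n) (_ : b ∈ Finset.univ) => (⟨2*(b:ℕ), by have := b.isLt; omega⟩ : Fin (2*n)))]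
    · exact Finset.card_univ.trans (Fintype.card_fin n)
    · intro a ha; exact Finset.mem_univ _
    · intro b hb; simp
    · intro a ha
      simp only [Finset.mem_filter, Finset.mem_univ, true_and] at ha
      ext; simp; omega
    · intro b hb; ext; simp
  have hcardS : S.card = n := hm
  have hES : E = S := Finset.eq_of_subset_of_card_le hsub (by omega)
  have h1 : (⟨1, by omega⟩ : Fin (2*n)) ∉ S := by
    have h1' : (⟨1, by omega⟩ : Fin (2*n)) ∉ E := by simp [hE]
    exact fun hmem => h1' ((Finset.ext_iff.mp hES ⟨1, by omega⟩).mpr hmem)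
  simp only [hS, Finset.mem_filter, Finset.mem_univ, true_and, not_exists, not_and] at h1
  have hmax : ∀ k : Fin (2*n), σ k ≤ σ ⟨1, by omega⟩ := by
    intro k
    rcases lt_trichotomy ((k:ℕ)) 1 with hk | hk | hk
    · have hk0 : k = ⟨0, by omega⟩ := by
        apply Fin.eq_of_val_eq; show (k:ℕ) = 0; omega
      have hud := h ⟨0, by omega⟩ (by omega)
      rw [if_pos (show ((⟨0, by omega⟩ : Fin (2*n)) : ℕ) % 2 = 0 from rfl)] at hud
      rw [hk0]; exact le_of_lt hud
    · have : k = ⟨1, by omega⟩ := by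
        apply Fin.eq_of_val_eq; show (k:ℕ) = 1; omega
      rw [this]
    · have := h1 k (by simp [Fin.lt_def]; omega)
      exact le_of_not_gt this
  have hsurj := hmax (σ.symm ⟨2*n-1, by omega⟩)
  rw [Equiv.apply_symm_apply] at hsurj
  have h2 : (σ ⟨1, by omega⟩ : ℕ) ≤ 2*n - 1 := by
    have := (σ ⟨1, by omega⟩).isLt; omega
  apply Fin.eq_of_val_eq
  show (σ ⟨1, by omega⟩ : ℕ) = 2*n - 1
  have hsurj' : (2*n - 1 : ℕ) ≤ (σ ⟨1, by omega⟩ : ℕ) := hsurj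
  omega
end

section
/- Let σ be an up-down permutation of length 2n and suppose σ(2j) = 2n for some j with j ≥ k+2 where k ≥ 0. Then mmp^{(1,0,0,0)}(σ) > n+k. -/
open Finset

/-!
Every even (0-indexed) position of an up-down permutation is an ascent, so it matches the pattern;
that gives `n` matches. Every position to the left of the position `p` of the maximal value `2n`
matches as well, witnessed by `p`; the odd ones among them add `p / 2` further matches.
With `p = 2j - 1` and `j ≥ k + 2` this is `n + j - 1 > n + k`.
-/

section Pattern1000

variable {m : ℕ} (σ : Equiv.Perm (Fin m))

/-- Position `i` is counted by `mmp1000 σ`. -/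
def HasLargerLater (i : Fin m) : Prop :=
  ∃ j, i < j ∧ σ i < σ j

theorem hasLargerLater_of_lt_of_isTop {i p : Fin m} (hp : IsTop (σ p)) (hi : i < p) :
    HasLargerLater σ i :=
  ⟨p, hi, lt_of_le_of_ne (hp _) (σ.injective.ne hi.ne)⟩

variable {σ}

theorem IsUpDown.hasLargerLater_of_even (h : IsUpDown σ) {i : Fin m} (hi : (i : ℕ) % 2 = 0)
    (hi1 : (i : ℕ) + 1 < m) : HasLargerLater σ i := by
  refine ⟨⟨i + 1, hi1⟩, Fin.lt_def.2 (Nat.lt_succ_self _), ?_⟩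
  simpa only [hi, if_true] using h i hi1

theorem card_le_mmp1000 {T : Finset ℕ} (hT : ∀ t ∈ T, ∃ ht : t < m, HasLargerLater σ ⟨t, ht⟩) :
    T.card ≤ mmp1000 σ := by
  classical
  calc T.card
      ≤ ((univ.filter (HasLargerLater σ)).map Fin.valEmbedding).card := by
        refine card_le_card fun t htT => ?_
        obtain ⟨ht, hlarger⟩ := hT t htT
        exact mem_map.2 ⟨⟨t, ht⟩, mem_filter.2 ⟨mem_univ _, hlarger⟩, rfl⟩
    _ = mmp1000 σ := by rw [card_map, mmp1000]; congr

end Pattern1000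

theorem card_image_double_union_image_double_add_one (a b : ℕ) :
    ((range a).image (2 * ·) ∪ (range b).image (2 * · + 1)).card = a + b := by
  rw [card_union_of_disjoint, card_image_of_injective, card_image_of_injective, card_range,
    card_range]
  · exact fun x y hxy => by omega
  · exact fun x y hxy => by omega
  · simp only [disjoint_left, mem_image, mem_range, not_exists, not_and]
    omega

theorem IsUpDown.add_div_two_le_mmp1000 {n : ℕ} {σ : Equiv.Perm (Fin (2 * n))} (h : IsUpDown σ)
    {p : Fin (2 * n)} (hp : IsTop (σ p)) : n + (p : ℕ) / 2 ≤ mmp1000 σ := by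
  rw [← card_image_double_union_image_double_add_one n ((p : ℕ) / 2)]
  refine card_le_mmp1000 fun t ht => ?_
  rcases mem_union.1 ht with heven | hodd
  · obtain ⟨i, hi, rfl⟩ := mem_image.1 heven
    have hi : i < n := mem_range.1 hi
    exact ⟨by omega, h.hasLargerLater_of_even (by simp) (by simp only; omega)⟩
  · obtain ⟨i, hi, rfl⟩ := mem_image.1 hodd
    have hi : i < (p : ℕ) / 2 := mem_range.1 hi
    exact ⟨by omega, hasLargerLater_of_lt_of_isTop σ hp (Fin.lt_def.2 (by simp only; omega))⟩

theorem stmt17 (n k j : ℕ) (σ : Equiv.Perm (Fin (2 * n)))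
    (h : IsUpDown σ) (hj1 : k + 2 ≤ j) (hj2 : j ≤ n)
    (hσ : σ ⟨2 * j - 1, by omega⟩ = ⟨2 * n - 1, by omega⟩) :
    n + k < mmp1000 σ := by
  have htop : IsTop (σ ⟨2 * j - 1, by omega⟩) := by
    rw [hσ]
    exact fun x => Fin.le_def.2 (by simp only; omega)
  have hbound := h.add_div_two_le_mmp1000 htop
  simp only at hbound
  omega
end

section
/- For fixed k ≥ 0 and n ≥ k+1, the counts D_{2n+1}^{=n+k} = |{σ ∈ DU_{2n+1} : mmp^{(1,0,0,0)}(σ) = n+k}| satisfy D_{2n+1}^{=n+k} = Σ_{j=0}^{k} C(2n, 2j) · A_{2j}(1) · A_{2(n-j)}^{=(n-j)+(k-j)}, where A_{2j}(1) = |UD_{2j}| (with A_0(1) = 1) and A_{2m}^{=m+s} = |{σ ∈ UD_{2m} : mmp^{(1,0,0,0)}(σ) = m+s}|. -/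
open Finset

/-!
The maximum of a down-up permutation `σ` of length `2n+1` sits at an even position `2j`. Every
entry to its left is followed by the maximum, the maximum is followed by nothing larger, and the
entries to its right form an up-down word, so `mmp σ = 2j + mmp β` with `β` the standardization of
the right part. An up-down permutation of length `2(n-j)` has at least `n-j` such entries, which
forces `j ≤ k`. For fixed `j`, a permutation with its maximum at `2j` is determined by the set of
values to the left of the maximum and the standardizations of the two sides, and every such triple
occurs; this gives the factor `C(2n, 2j) · |DU_{2j}|`, and `|DU_{2j}| = |UD_{2j}|` by
complementation.
-/

open Function Equiv
open scoped Nat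

section Pattern

variable {α : Type*} [LinearOrder α] {m : ℕ} {f g : Fin m → α}

/-- The standardization of `f`: `pattern f i` is the rank of `f i` among the values of `f`. -/
def pattern (f : Fin m → α) : Perm (Fin m) := (Tuple.sort f)⁻¹

lemma strictMono_comp_sort (hf : Injective f) : StrictMono (f ∘ Tuple.sort f) :=
  (Tuple.monotone_sort f).strictMono_of_injective (hf.comp (Tuple.sort f).injective)

lemma comp_sort_apply_pattern (f : Fin m → α) (x : Fin m) :
    (f ∘ Tuple.sort f) (pattern f x) = f x := by
  simp [pattern]

lemma pattern_lt_pattern_iff (hf : Injective f) {x y : Fin m} :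
    pattern f x < pattern f y ↔ f x < f y := by
  rw [← comp_sort_apply_pattern f x, ← comp_sort_apply_pattern f y]
  exact (strictMono_comp_sort hf).lt_iff_lt.symm

lemma comp_sort_eq_orderEmbOfFin (hf : Injective f) :
    f ∘ Tuple.sort f =
      (univ.image f).orderEmbOfFin (by rw [card_image_of_injective _ hf, card_fin]) :=
  orderEmbOfFin_unique _ (fun _ => mem_image_of_mem _ (mem_univ _)) (strictMono_comp_sort hf)

lemma eq_of_image_eq_of_pattern_eq (hf : Injective f) (hg : Injective g)
    (himage : univ.image f = univ.image g) (hpattern : pattern f = pattern g) : f = g := by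
  have hsort : f ∘ Tuple.sort f = g ∘ Tuple.sort g := by
    rw [comp_sort_eq_orderEmbOfFin hf]
    exact (orderEmbOfFin_unique _ (fun _ => himage ▸ mem_image_of_mem _ (mem_univ _))
      (strictMono_comp_sort hg)).symm
  funext x
  rw [← comp_sort_apply_pattern f x, ← comp_sort_apply_pattern g x, hsort, hpattern]

lemma mmp1000_pattern (hf : Injective f) :
    mmp1000 (pattern f) = #{i | ∃ j, i < j ∧ f i < f j} := by
  simp only [mmp1000, pattern_lt_pattern_iff hf]

lemma isDownUp_iff_of_lt_iff {π : Perm (Fin m)} (hf : Injective f)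
    (hπ : ∀ x y, π x < π y ↔ f x < f y) :
    IsDownUp π ↔ ∀ i (h : i + 1 < m), f ⟨i + 1, h⟩ < f ⟨i, by omega⟩ ↔ i % 2 = 0 := by
  refine ⟨fun H i h => ?_, fun H i h => ?_⟩
  · have := H ⟨i, by omega⟩ h
    split_ifs at this with hi
    · simpa [hi, hπ] using this
    · simp only [hi, iff_false, not_lt]
      exact ((hπ _ _).1 this).le
  · have := H i h
    split_ifs with hi
    · exact (hπ _ _).2 (this.2 hi)
    · refine (hπ _ _).2 (lt_of_le_of_ne (not_lt.1 (mt this.1 hi)) (hf.ne ?_))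
      simp [Fin.ext_iff]

lemma isUpDown_iff_of_lt_iff {π : Perm (Fin m)} (hf : Injective f)
    (hπ : ∀ x y, π x < π y ↔ f x < f y) :
    IsUpDown π ↔ ∀ i (h : i + 1 < m), f ⟨i + 1, h⟩ < f ⟨i, by omega⟩ ↔ i % 2 = 1 := by
  refine ⟨fun H i h => ?_, fun H i h => ?_⟩
  · have := H ⟨i, by omega⟩ h
    split_ifs at this with hi
    · simp only [show i % 2 ≠ 1 by simpa using hi, iff_false, not_lt]
      exact ((hπ _ _).1 this).le
    · simpa [Nat.mod_two_ne_zero.1 hi, hπ] using this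
  · have := H i h
    split_ifs with hi
    · refine (hπ _ _).2 (lt_of_le_of_ne (not_lt.1 (mt this.1 (by simp_all))) (hf.ne ?_))
      simp [Fin.ext_iff]
    · exact (hπ _ _).2 (this.2 (Nat.mod_two_ne_zero.1 hi))

end Pattern

lemma card_filter_perm_apply_eq {α : Type*} [Fintype α] [DecidableEq α] (p q : α) :
    #{σ : Perm α | σ p = q} = (Fintype.card α - 1)! := by
  have hfiber (q' : α) : #{σ : Perm α | σ p = q'} = #{σ : Perm α | σ p = q} := by
    refine card_nbij' (swap q' q * ·) (swap q' q * ·) ?_ ?_ ?_ ?_ <;>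
      intro σ hσ <;> simp_all [← mul_assoc]
  have hsum : (Fintype.card α)! = Fintype.card α * #{σ : Perm α | σ p = q} := by
    rw [← Fintype.card_perm, ← card_univ, card_eq_sum_card_fiberwise (f := (· p)) (t := univ)
      (fun _ _ => mem_univ _)]
    simp [hfiber]
  have hpos : 0 < Fintype.card α := Fintype.card_pos_iff.2 ⟨p⟩
  rw [← Nat.mul_factorial_pred hpos.ne'] at hsum
  exact (Nat.eq_of_mul_eq_mul_left hpos hsum).symm

section Peak

variable {a b m : ℕ} (h : a + b = m) {σ τ : Perm (Fin (m + 1))}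

def leftPos : Fin a ↪o Fin (m + 1) :=
  OrderEmbedding.ofStrictMono (fun i => ⟨i, by omega⟩) fun _ _ hij => hij

def peakPos : Fin (m + 1) := ⟨a, by omega⟩

def rightPos : Fin b ↪o Fin (m + 1) :=
  OrderEmbedding.ofStrictMono (fun i => ⟨a + 1 + i, by omega⟩) fun _ _ hij => by
    simp only [Fin.mk_lt_mk]; omega

@[simp] lemma val_leftPos (i : Fin a) : (leftPos h i : ℕ) = i := rfl
@[simp] lemma val_peakPos : (peakPos h : ℕ) = a := rfl
@[simp] lemma val_rightPos (i : Fin b) : (rightPos h i : ℕ) = a + 1 + i := rfl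

lemma leftPos_lt_peakPos (i : Fin a) : leftPos h i < peakPos h :=
  Fin.lt_def.2 (by simp only [val_leftPos, val_peakPos]; omega)

lemma peakPos_lt_rightPos (i : Fin b) : peakPos h < rightPos h i :=
  Fin.lt_def.2 (by simp only [val_rightPos, val_peakPos]; omega)

lemma exists_leftPos_or_eq_peakPos_or_exists_rightPos (x : Fin (m + 1)) :
    (∃ i, leftPos h i = x) ∨ x = peakPos h ∨ ∃ i, rightPos h i = x := by
  rcases lt_trichotomy (x : ℕ) a with hx | hx | hx
  · exact .inl ⟨⟨x, hx⟩, rfl⟩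
  · exact .inr (.inl (Fin.ext hx))
  · exact .inr (.inr ⟨⟨x - (a + 1), by omega⟩, Fin.ext (by simp; omega)⟩)

lemma apply_lt_last_of_ne_peakPos (hσ : σ (peakPos h) = Fin.last m) {x : Fin (m + 1)}
    (hx : x ≠ peakPos h) : σ x < Fin.last m :=
  (Fin.le_last _).lt_of_ne (hσ ▸ σ.injective.ne hx)

lemma isDownUp_iff_of_apply_peakPos (ha : a % 2 = 0) (hσ : σ (peakPos h) = Fin.last m) :
    IsDownUp σ ↔ IsDownUp (pattern (σ ∘ leftPos h)) ∧ IsUpDown (pattern (σ ∘ rightPos h)) := by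
  rw [isDownUp_iff_of_lt_iff σ.injective fun _ _ => Iff.rfl,
    isDownUp_iff_of_lt_iff (σ.injective.comp (leftPos h).injective)
      fun _ _ => pattern_lt_pattern_iff (σ.injective.comp (leftPos h).injective),
    isUpDown_iff_of_lt_iff (σ.injective.comp (rightPos h).injective)
      fun _ _ => pattern_lt_pattern_iff (σ.injective.comp (rightPos h).injective)]
  -- The right part starts at the odd position `a + 1`, so its parities are flipped.
  refine ⟨fun H => ⟨fun i hi => H i (by omega), fun i hi => (H (a + 1 + i) (by omega)).trans
    (by omega)⟩, fun ⟨Hl, Hr⟩ i hi => ?_⟩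
  rcases lt_trichotomy (i + 1) a with hia | hia | hia
  · exact Hl i hia
  · have hpeak : (⟨i + 1, hi⟩ : Fin (m + 1)) = peakPos h := Fin.ext hia
    rw [hpeak, hσ]
    exact iff_of_false (Fin.le_last _).not_gt (by omega)
  obtain rfl | hia := (Nat.lt_succ_iff.1 hia).eq_or_lt
  · have hpeak : (⟨a, by omega⟩ : Fin (m + 1)) = peakPos h := rfl
    rw [hpeak, hσ]
    exact iff_of_true (apply_lt_last_of_ne_peakPos h hσ (Fin.ne_of_gt (Fin.lt_def.2 (by simp))))
      ha
  · obtain ⟨c, rfl⟩ : ∃ c, i = a + 1 + c := ⟨i - (a + 1), by omega⟩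
    exact (Hr c (by omega)).trans (by omega)

lemma exists_gt_apply_lt_rightPos_iff (c : Fin b) :
    (∃ y, rightPos h c < y ∧ σ (rightPos h c) < σ y) ↔
      ∃ d, c < d ∧ σ (rightPos h c) < σ (rightPos h d) := by
  refine ⟨fun ⟨y, hcy, hσy⟩ => ?_, fun ⟨d, hcd, hσd⟩ => ⟨_, (rightPos h).lt_iff_lt.2 hcd, hσd⟩⟩
  rcases exists_leftPos_or_eq_peakPos_or_exists_rightPos h y with ⟨i, rfl⟩ | rfl | ⟨d, rfl⟩
  · exact ((peakPos_lt_rightPos h c).trans (hcy.trans (leftPos_lt_peakPos h i))).false.elim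
  · exact (hcy.trans (peakPos_lt_rightPos h c)).false.elim
  · exact ⟨d, (rightPos h).lt_iff_lt.1 hcy, hσy⟩

lemma mmp1000_eq_add_of_apply_peakPos (hσ : σ (peakPos h) = Fin.last m) :
    mmp1000 σ = a + mmp1000 (pattern (σ ∘ rightPos h)) := by
  classical
  rw [mmp1000_pattern (σ.injective.comp (rightPos h).injective), mmp1000]
  have hsplit : ({x | ∃ y, x < y ∧ σ x < σ y} : Finset (Fin (m + 1))) = Iio (peakPos h) ∪
      ({c | ∃ d, c < d ∧ (σ ∘ rightPos h) c < (σ ∘ rightPos h) d} : Finset (Fin b)).map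
        (rightPos h).toEmbedding := by
    ext x
    simp only [mem_filter, mem_univ, true_and, mem_union, mem_Iio, mem_map,
      RelEmbedding.coe_toEmbedding, Function.comp_apply]
    rcases exists_leftPos_or_eq_peakPos_or_exists_rightPos h x with ⟨i, rfl⟩ | rfl | ⟨c, rfl⟩
    · exact iff_of_true ⟨_, leftPos_lt_peakPos h i, hσ ▸ apply_lt_last_of_ne_peakPos h hσ
        (leftPos_lt_peakPos h i).ne⟩ (.inl (leftPos_lt_peakPos h i))
    · refine iff_of_false (fun ⟨y, _, hy⟩ => (hσ ▸ hy).not_ge (Fin.le_last _)) ?_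
      rintro (hlt | ⟨c, -, hc⟩)
      · exact lt_irrefl _ hlt
      · exact (peakPos_lt_rightPos h c).ne' hc
    · rw [exists_gt_apply_lt_rightPos_iff]
      simp only [(rightPos h).injective.eq_iff, exists_eq_right,
        (peakPos_lt_rightPos h c).not_gt, false_or]
  rw [hsplit, card_union_of_disjoint, Fin.card_Iio, card_map, val_peakPos]
  refine disjoint_left.2 fun x hx hx' => ?_
  obtain ⟨c, -, rfl⟩ := mem_map.1 hx'
  exact (mem_Iio.1 hx).not_gt (peakPos_lt_rightPos h c)

lemma image_comp_rightPos_of_apply_peakPos (hσ : σ (peakPos h) = Fin.last m) :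
    univ.image (σ ∘ rightPos h) = (univ.erase (Fin.last m)) \ univ.image (σ ∘ leftPos h) := by
  ext y
  obtain ⟨x, rfl⟩ := σ.surjective y
  simp only [mem_image, mem_univ, true_and, mem_sdiff, mem_erase, Function.comp_apply,
    σ.injective.eq_iff, and_true, not_exists]
  rcases exists_leftPos_or_eq_peakPos_or_exists_rightPos h x with ⟨i, rfl⟩ | rfl | ⟨c, rfl⟩
  · exact iff_of_false (fun ⟨c, hc⟩ => ((leftPos_lt_peakPos h i).trans
      (peakPos_lt_rightPos h c)).ne' hc) fun ⟨_, hi⟩ => hi i rfl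
  · exact iff_of_false (fun ⟨c, hc⟩ => (peakPos_lt_rightPos h c).ne' hc) fun ⟨hne, _⟩ => hne hσ
  · exact iff_of_true ⟨c, rfl⟩ ⟨(apply_lt_last_of_ne_peakPos h hσ
      (peakPos_lt_rightPos h c).ne').ne, fun i hi => ((leftPos_lt_peakPos h i).trans
      (peakPos_lt_rightPos h c)).ne hi⟩

lemma eq_of_apply_peakPos_eq_last (hσ : σ (peakPos h) = Fin.last m)
    (hτ : τ (peakPos h) = Fin.last m) (hleft : σ ∘ leftPos h = τ ∘ leftPos h)
    (hright : pattern (σ ∘ rightPos h) = pattern (τ ∘ rightPos h)) : σ = τ := by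
  have hright' : σ ∘ rightPos h = τ ∘ rightPos h :=
    eq_of_image_eq_of_pattern_eq (σ.injective.comp (rightPos h).injective)
      (τ.injective.comp (rightPos h).injective)
      (by rw [image_comp_rightPos_of_apply_peakPos h hσ, image_comp_rightPos_of_apply_peakPos h hτ,
        hleft]) hright
  ext1 x
  rcases exists_leftPos_or_eq_peakPos_or_exists_rightPos h x with ⟨i, rfl⟩ | rfl | ⟨c, rfl⟩
  · exact congrFun hleft i
  · exact hσ.trans hτ.symm
  · exact congrFun hright' c

theorem card_filter_apply_peakPos_eq_last (s : Finset (Perm (Fin a))) (t : Finset (Perm (Fin b))) :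
    #{σ : Perm (Fin (m + 1)) | σ (peakPos h) = Fin.last m ∧ pattern (σ ∘ leftPos h) ∈ s ∧
      pattern (σ ∘ rightPos h) ∈ t} = m.choose a * #s * #t := by
  classical
  -- `Φ` is injective on the `m!` permutations with `σ (peakPos h) = Fin.last m`, and its target
  -- has `m.choose a * a! * b! = m!` elements, so it is onto.
  set Φ : Perm (Fin (m + 1)) → Finset (Fin (m + 1)) × Perm (Fin a) × Perm (Fin b) :=
    fun σ => (univ.image (σ ∘ leftPos h), pattern (σ ∘ leftPos h), pattern (σ ∘ rightPos h))
  set G : Finset (Perm (Fin (m + 1))) := {σ | σ (peakPos h) = Fin.last m}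
  set T := powersetCard a (univ.erase (Fin.last m)) ×ˢ (univ : Finset (Perm (Fin a))) ×ˢ
    (univ : Finset (Perm (Fin b)))
  have hmaps : ∀ σ ∈ G, Φ σ ∈ T := by
    intro σ hσ
    have hσ : σ (peakPos h) = Fin.last m := (mem_filter.1 hσ).2
    refine mem_product.2 ⟨mem_powersetCard.2 ⟨fun y hy => ?_, ?_⟩, mem_univ _⟩
    · obtain ⟨i, -, rfl⟩ := mem_image.1 hy
      exact mem_erase.2 ⟨(apply_lt_last_of_ne_peakPos h hσ (leftPos_lt_peakPos h i).ne).ne,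
        mem_univ _⟩
    · rw [card_image_of_injective _ (σ.injective.comp (leftPos h).injective), card_fin]
  have hinj : Set.InjOn Φ G := by
    intro σ hσ τ hτ hστ
    simp only [Φ, Prod.mk.injEq] at hστ
    obtain ⟨himage, hleft, hright⟩ := hστ
    exact eq_of_apply_peakPos_eq_last h (mem_filter.1 hσ).2 (mem_filter.1 hτ).2
      (eq_of_image_eq_of_pattern_eq (σ.injective.comp (leftPos h).injective)
        (τ.injective.comp (leftPos h).injective) himage hleft) hright
  have hcard : #T = #G := calc
    #T = m.choose a * a ! * b ! := by simp [T, card_product, Fintype.card_perm, mul_assoc]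
    _ = #G := by
      rw [card_filter_perm_apply_eq, Fintype.card_fin, Nat.add_sub_cancel, ← h,
        ← Nat.choose_mul_factorial_mul_factorial (Nat.le_add_right a b), Nat.add_sub_cancel_left]
  obtain hsurj := surj_on_of_inj_on_of_card_le (fun σ hσ => Φ σ) hmaps
    (fun σ τ hσ hτ hστ => hinj hσ hτ hστ) hcard.le
  have htarget : m.choose a * #s * #t = #(powersetCard a (univ.erase (Fin.last m)) ×ˢ s ×ˢ t) := by
    simp [card_product, card_powersetCard, mul_assoc]
  rw [htarget]
  refine card_bij (fun σ _ => Φ σ) (fun σ hσ => ?_) (fun σ hσ τ hτ => hinj (by simp_all [G])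
    (by simp_all [G])) (fun y hy => ?_)
  · simp only [mem_filter, mem_univ, true_and] at hσ
    exact mem_product.2 ⟨(mem_product.1 (hmaps σ (by simp [G, hσ.1]))).1,
      mem_product.2 ⟨hσ.2.1, hσ.2.2⟩⟩
  · obtain ⟨σ, hσ, rfl⟩ := hsurj y (by simp_all [T])
    simp only [mem_product, Φ] at hy
    exact ⟨σ, by simp_all [G], rfl⟩

end Peak

lemma permComplement_permComplement {m : ℕ} (σ : Perm (Fin m)) :
    permComplement (permComplement σ) = σ := by
  ext i
  simp [permComplement]

lemma isUpDown_permComplement_iff {m : ℕ} (σ : Perm (Fin m)) :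
    IsUpDown (permComplement σ) ↔ IsDownUp σ := by
  refine forall_congr' fun i => forall_congr' fun hi => ?_
  split_ifs <;> exact Fin.rev_lt_rev

lemma isDownUp_permComplement_iff {m : ℕ} (σ : Perm (Fin m)) :
    IsDownUp (permComplement σ) ↔ IsUpDown σ := by
  rw [← isUpDown_permComplement_iff, permComplement_permComplement]

lemma duCount_eq_udCount (m : ℕ) : duCount m = udCount m := by
  classical
  refine card_nbij' permComplement permComplement ?_ ?_ ?_ ?_ <;> intro σ hσ <;>
    simp_all [DUset, UDset, isUpDown_permComplement_iff, isDownUp_permComplement_iff,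
      permComplement_permComplement]

lemma symm_last_mod_two_of_isDownUp {n : ℕ} {σ : Perm (Fin (2 * n + 1))} (hσ : IsDownUp σ) :
    (σ.symm (Fin.last (2 * n)) : ℕ) % 2 = 0 := by
  by_contra hodd
  have hlt := hσ (σ.symm (Fin.last (2 * n))) (by omega)
  rw [if_neg hodd, σ.apply_symm_apply] at hlt
  exact (Fin.le_last _).not_gt hlt

lemma le_mmp1000_of_isUpDown {r : ℕ} {β : Perm (Fin (2 * r))} (hβ : IsUpDown β) :
    r ≤ mmp1000 β := by
  have hcard := card_le_card_of_injOn (s := (univ : Finset (Fin r)))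
    (t := {i | ∃ j, i < j ∧ β i < β j}) (fun i => ⟨2 * i, by omega⟩) (fun i _ => ?_)
    (fun i _ i' _ hii' => Fin.ext (by simp only [Fin.mk.injEq] at hii'; omega))
  · simpa [mmp1000] using hcard
  · have hasc := hβ ⟨2 * i, by omega⟩ (show 2 * (i : ℕ) + 1 < 2 * r by omega)
    rw [if_pos (by simp)] at hasc
    exact mem_filter.2 ⟨mem_univ _, _, Fin.lt_def.2 (by simp), hasc⟩

lemma add_le_mmp1000_of_isDownUp {n : ℕ} {σ : Perm (Fin (2 * n + 1))} (hσ : IsDownUp σ) :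
    n + (σ.symm (Fin.last (2 * n)) : ℕ) / 2 ≤ mmp1000 σ := by
  have hpeven := symm_last_mod_two_of_isDownUp hσ
  have hple := (σ.symm (Fin.last (2 * n))).isLt
  set j := (σ.symm (Fin.last (2 * n)) : ℕ) / 2
  have hj : 2 * j + 2 * (n - j) = 2 * n := by omega
  have hpeak : σ (peakPos hj) = Fin.last (2 * n) := by
    rw [← σ.apply_symm_apply (Fin.last _)]
    exact congrArg σ (Fin.ext (by simp only [val_peakPos]; omega))
  have hright := le_mmp1000_of_isUpDown ((isDownUp_iff_of_apply_peakPos hj (by omega) hpeak).1 hσ).2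
  rw [mmp1000_eq_add_of_apply_peakPos hj hpeak]
  omega

lemma card_filter_isDownUp_symm_last {n k j : ℕ} (hjk : j ≤ k) :
    #{σ ∈ DUset (2 * n + 1) | mmp1000 σ = n + k ∧ (σ.symm (Fin.last (2 * n)) : ℕ) / 2 = j} =
      (2 * n).choose (2 * j) * udCount (2 * j) * AcountEq (n - j) (n + k - 2 * j) := by
  classical
  rcases le_or_gt j n with hjn | hnj
  swap
  · rw [Nat.choose_eq_zero_of_lt (by omega), zero_mul, zero_mul, card_eq_zero,
      filter_eq_empty_iff]
    rintro σ - ⟨-, hp⟩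
    have := (σ.symm (Fin.last (2 * n))).isLt
    omega
  have hj : 2 * j + 2 * (n - j) = 2 * n := by omega
  rw [← duCount_eq_udCount, duCount, AcountEq, ← card_filter_apply_peakPos_eq_last hj]
  congr 1
  ext σ
  simp only [DUset, UDset, mem_filter, mem_univ, true_and]
  have hsymm : σ (peakPos hj) = Fin.last (2 * n) ↔ (σ.symm (Fin.last (2 * n)) : ℕ) = 2 * j := by
    rw [eq_comm, ← Equiv.symm_apply_eq, Fin.ext_iff, val_peakPos]
  have hsplit (hpeak : σ (peakPos hj) = Fin.last (2 * n)) :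
      IsDownUp σ ∧ mmp1000 σ = n + k ↔ IsDownUp (pattern (σ ∘ leftPos hj)) ∧
        IsUpDown (pattern (σ ∘ rightPos hj)) ∧
          mmp1000 (pattern (σ ∘ rightPos hj)) = n + k - 2 * j := by
    rw [isDownUp_iff_of_apply_peakPos hj (by omega) hpeak, mmp1000_eq_add_of_apply_peakPos hj hpeak,
      and_assoc]
    exact and_congr_right fun _ => and_congr_right fun _ => by omega
  constructor
  · rintro ⟨hdu, hmmp, hp⟩
    have hpeak := hsymm.2 (by have := symm_last_mod_two_of_isDownUp hdu; omega)
    exact ⟨hpeak, (hsplit hpeak).1 ⟨hdu, hmmp⟩⟩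
  · rintro ⟨hpeak, hpatterns⟩
    obtain ⟨hdu, hmmp⟩ := (hsplit hpeak).2 hpatterns
    exact ⟨hdu, hmmp, by have := hsymm.1 hpeak; omega⟩

theorem stmt19_general (n k : ℕ) :
    DcountEq n (n + k) = ∑ j ∈ Finset.range (k + 1),
      Nat.choose (2 * n) (2 * j) * udCount (2 * j) *
        AcountEq (n - j) (n + k - 2 * j) := by
  classical
  have hpeak_half : ∀ σ ∈ {σ ∈ DUset (2 * n + 1) | mmp1000 σ = n + k},
      (σ.symm (Fin.last (2 * n)) : ℕ) / 2 ∈ range (k + 1) := by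
    intro σ hσ
    simp only [DUset, mem_filter, mem_univ, true_and] at hσ
    have := add_le_mmp1000_of_isDownUp hσ.1
    rw [mem_range]
    omega
  rw [DcountEq, card_eq_sum_card_fiberwise hpeak_half]
  refine sum_congr rfl fun j hj => ?_
  rw [filter_filter, card_filter_isDownUp_symm_last (Nat.lt_succ_iff.1 (mem_range.1 hj))]

theorem stmt19 (n k : ℕ) (hn : k + 1 ≤ n) :
    DcountEq n (n + k) = ∑ j ∈ Finset.range (k + 1),
      Nat.choose (2 * n) (2 * j) * udCount (2 * j) *
        AcountEq (n - j) (n + k - 2 * j) :=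
  stmt19_general n k
end
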